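/- arXiv:1501.00387 — 6 statements merged into one kernel-verified Lean document; each statement's English description precedes it below -/
import Mathlib

section
/- Let E be an election, p a designated candidate, and t any shift action for p. Then for every candidate c ≠ p and every voter v^i, the rank of c in v^i's order in shf(E,t) is at most rank(c,v^i)+1; consequently, for every k < m, the (k+1)-Approval score of c in shf(E,t) is at least the k-Approval score of c in E. In particular, if k is the Bucklin winning round of E, then the Bucklin winning round of shf(E,t) exists and is at most k+1. -/
/-- The rank function of the election obtained by shifting the designated candidate `p`
upwards by `t i` positions in the vote of voter `i` (placing `p` on top if `t i` exceeds
`rank i p - 1`); all other candidates keep their relative order. -/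
def shiftRank {C : Type*} [DecidableEq C] {n : ℕ} (rank : Fin n → C → ℕ) (p : C)
    (t : Fin n → ℕ) : Fin n → C → ℕ := fun i c =>
  if c = p then max 1 (rank i p - t i)
  else if max 1 (rank i p - t i) ≤ rank i c ∧ rank i c < rank i p then rank i c + 1
  else rank i c

/-- The `k`-Approval score of candidate `c`. -/
def approvalScoreAt {C : Type*} {n : ℕ} (rank : Fin n → C → ℕ) (k : ℕ) (c : C) : ℕ :=
  (Finset.univ.filter (fun i : Fin n => rank i c ≤ k)).card

theorem shiftRank_le_succ {C : Type*} [DecidableEq C] {n : ℕ} (rank : Fin n → C → ℕ) (p : C)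
    (t : Fin n → ℕ) (i : Fin n) (c : C) : shiftRank rank p t i c ≤ rank i c + 1 := by
  unfold shiftRank
  split_ifs with hcp
  · subst hcp
    omega
  all_goals omega

theorem approvalScoreAt_le_of_le_add {C : Type*} {n : ℕ} {rank rank' : Fin n → C → ℕ} {c : C}
    {d : ℕ} (h : ∀ i, rank' i c ≤ rank i c + d) (k : ℕ) :
    approvalScoreAt rank k c ≤ approvalScoreAt rank' (k + d) c := by
  refine Finset.card_le_card fun i hi => ?_
  simp only [Finset.mem_filter, Finset.mem_univ, true_and] at hi ⊢
  exact (h i).trans (Nat.add_le_add_right hi d)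

theorem approvalScoreAt_le_shiftRank_succ {C : Type*} [DecidableEq C] {n : ℕ}
    (rank : Fin n → C → ℕ) (p : C) (t : Fin n → ℕ) (k : ℕ) (c : C) :
    approvalScoreAt rank k c ≤ approvalScoreAt (shiftRank rank p t) (k + 1) c :=
  approvalScoreAt_le_of_le_add (shiftRank_le_succ rank p t · c) k

theorem statement1_general {C : Type*} [DecidableEq C] {n m : ℕ}
    (rank : Fin n → C → ℕ)
    (p : C) (t : Fin n → ℕ) :
    (∀ c : C, c ≠ p → ∀ i : Fin n, shiftRank rank p t i c ≤ rank i c + 1) ∧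
    (∀ c : C, c ≠ p → ∀ k : ℕ, k < m →
      approvalScoreAt rank k c ≤ approvalScoreAt (shiftRank rank p t) (k + 1) c) ∧
    (∀ k : ℕ, IsLeast {j : ℕ | ∃ c : C, n / 2 + 1 ≤ approvalScoreAt rank j c} k →
      ∃ ℓ : ℕ,
        IsLeast {j : ℕ | ∃ c : C, n / 2 + 1 ≤ approvalScoreAt (shiftRank rank p t) j c} ℓ ∧
        ℓ ≤ k + 1) := by
  refine ⟨fun c _ i => shiftRank_le_succ rank p t i c,
    fun c _ k _ => approvalScoreAt_le_shiftRank_succ rank p t k c, ?_⟩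
  rintro k ⟨⟨c, hc⟩, -⟩
  have hmajority : k + 1 ∈
      {j : ℕ | ∃ c : C, n / 2 + 1 ≤ approvalScoreAt (shiftRank rank p t) j c} :=
    ⟨c, hc.trans (approvalScoreAt_le_shiftRank_succ rank p t k c)⟩
  exact ⟨_, isLeast_csInf ⟨_, hmajority⟩, (isLeast_csInf ⟨_, hmajority⟩).2 hmajority⟩

/-- after a shift action, every candidate `c ≠ p` drops by at most one
position in every vote; consequently `c`'s `(k+1)`-Approval score after the shift is at
least `c`'s `k`-Approval score before; in particular, if `k` is the Bucklin winning round
of the original election then the Bucklin winning round of the shifted election exists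
and is at most `k + 1`. -/
theorem statement1 {C : Type*} [Fintype C] [DecidableEq C] {n m : ℕ}
    (rank : Fin n → C → ℕ)
    (hcard : Fintype.card C = m)
    (hinj : ∀ i, Function.Injective (rank i))
    (hrange : ∀ i c, 1 ≤ rank i c ∧ rank i c ≤ m)
    (p : C) (t : Fin n → ℕ) :
    (∀ c : C, c ≠ p → ∀ i : Fin n, shiftRank rank p t i c ≤ rank i c + 1) ∧
    (∀ c : C, c ≠ p → ∀ k : ℕ, k < m →
      approvalScoreAt rank k c ≤ approvalScoreAt (shiftRank rank p t) (k + 1) c) ∧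
    (∀ k : ℕ, IsLeast {j : ℕ | ∃ c : C, n / 2 + 1 ≤ approvalScoreAt rank j c} k →
      ∃ ℓ : ℕ,
        IsLeast {j : ℕ | ∃ c : C, n / 2 + 1 ≤ approvalScoreAt (shiftRank rank p t) j c} ℓ ∧
        ℓ ≤ k + 1) :=
  statement1_general rank p t
end

section
/- Let E be an election, p a designated candidate with nondecreasing cost functions π^i satisfying π^i(0)=0, fix a candidate c ≠ p and a round k ∈ {1,…,m−1}. Let A = {v^i : rank(c,v^i)=k and rank(p,v^i)=k+1}, B = {v^i : rank(c,v^i)=k and rank(p,v^i) ≥ k+2}, and fix an enumeration w_1,…,w_{|B|} of B. For integers 0 ≤ i ≤ j ≤ |B| and h ≥ 0, let b(i,j,h) ∈ ℤ≥0∪{+∞} be the minimum of Π(t) over all shift actions t such that t_r = 0 for every voter outside A ∪ {w_1,…,w_j}, p has rank at most k+1 in at least i of the votes w_1,…,w_j in shf(E,t), and p has rank at most k in at least h of the votes of A ∪ {w_1,…,w_j} in shf(E,t) (with the minimum over the empty set equal to +∞). Then for all 1 ≤ i ≤ j ≤ |B| and all h ≥ 1: b(i,j,h) = min{ b(i−1,j−1,h)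 + π^{w_j}(rank(p,w_j)−(k+1)), b(i−1,j−1,h−1) + π^{w_j}(rank(p,w_j)−k), b(i,j−1,h) }, where π^{w_j} denotes the cost function of voter w_j. -/
/-- The cost `Π(t)` of a shift action `t`. -/
def briberyCost {n : ℕ} (π : Fin n → ℕ → ℕ∞) (t : Fin n → ℕ) : ℕ∞ :=
  ∑ i, π i (t i)

/-!
When the vote `w_j` joins the pool, an optimal action shifts `p` in `w_j` either not at all, or
exactly to position `k + 1`, or exactly to position `k`: costs are monotone, so overshooting a
position never pays, and resetting the shift in `w_j` to zero turns any feasible action into one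
for `j - 1` whose two counts drop by the contributions of `w_j` only. Both counts are threshold
conditions `rank r p - (k + 1) ≤ t r` and `rank r p - k ≤ t r` on the individual shifts, and the
recurrence holds for any two thresholds, the first below the second, in the new vote.
-/

open Finset Function

section Counting

variable {ι : Type*} [DecidableEq ι]

lemma card_filter_insert_of_notMem {s : Finset ι} {a : ι} (ha : a ∉ s)
    (P : ι → Prop) [DecidablePred P] :
    #{r ∈ insert a s | P r} = #{r ∈ s | P r} + if P a then 1 else 0 := by
  rw [filter_insert]
  split_ifs with hP
  · exact card_insert_of_notMem (fun h => ha (mem_filter.1 h).1)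
  · rfl

lemma card_filter_update_of_notMem {s : Finset ι} {a : ι} (ha : a ∉ s)
    (γ t : ι → ℕ) (v : ℕ) :
    #{r ∈ s | γ r ≤ update t a v r} = #{r ∈ s | γ r ≤ t r} := by
  congr 1
  refine filter_congr fun r hr => ?_
  rw [update_of_ne (ne_of_mem_of_not_mem hr ha)]

end Counting

section ThresholdCost

variable {n : ℕ} (π : Fin n → ℕ → ℕ∞) (α β : Fin n → ℕ)

lemma briberyCost_update_add (t : Fin n → ℕ) (a : Fin n) (v : ℕ) :
    briberyCost π (update t a v) + π a (t a) = briberyCost π t + π a v := by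
  unfold briberyCost
  rw [← add_sum_erase _ _ (mem_univ a), ← add_sum_erase _ _ (mem_univ a), update_self,
    sum_congr rfl fun r hr => by rw [update_of_ne (ne_of_mem_erase hr)]]
  ring

/-- Shift actions supported on `S` that bring at least `i` votes of `W` to their first threshold
`α` and at least `h` votes of `S` to their second threshold `β`. With `α r = rank r p - (k + 1)`,
`β r = rank r p - k`, `W = {w₁, …, w_j}` and `S = A ∪ W` the least cost of such an action is
`b(i, j, h)`. -/
def thresholdShifts (S W : Finset (Fin n)) (i h : ℕ) : Set (Fin n → ℕ) :=
  {t | (∀ r ∉ S, t r = 0) ∧ i ≤ #{r ∈ W | α r ≤ t r} ∧ h ≤ #{r ∈ S | β r ≤ t r}}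

noncomputable def minThresholdCost (S W : Finset (Fin n)) (i h : ℕ) : ℕ∞ :=
  sInf (briberyCost π '' thresholdShifts α β S W i h)

variable {π α β} {S W : Finset (Fin n)} {a : Fin n}

lemma minThresholdCost_insert_le_add (hπ0 : π a 0 = 0) (haS : a ∉ S) (haW : a ∉ W)
    {i h i' h' v : ℕ} (hi : i ≤ i' + if α a ≤ v then 1 else 0)
    (hh : h ≤ h' + if β a ≤ v then 1 else 0) :
    minThresholdCost π α β (insert a S) (insert a W) i h
      ≤ minThresholdCost π α β S W i' h' + π a v := by
  rw [minThresholdCost, minThresholdCost, ENat.sInf_add]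
  refine le_iInf₂ ?_
  rintro _ ⟨t, ⟨ht0, hti, hth⟩, rfl⟩
  have hcost := briberyCost_update_add π t a v
  rw [ht0 a haS, hπ0, add_zero] at hcost
  refine sInf_le_of_le ⟨update t a v, ⟨fun r hr => ?_, ?_, ?_⟩, rfl⟩ hcost.le
  · rw [mem_insert, not_or] at hr
    rw [update_of_ne hr.1, ht0 r hr.2]
  · rw [card_filter_insert_of_notMem haW, card_filter_update_of_notMem haW, update_self]
    omega
  · rw [card_filter_insert_of_notMem haS, card_filter_update_of_notMem haS, update_self]
    omega

lemma update_zero_mem_thresholdShifts (haS : a ∉ S) (haW : a ∉ W) {t : Fin n → ℕ} {i h i' h' : ℕ}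
    (ht : t ∈ thresholdShifts α β (insert a S) (insert a W) i h)
    (hi : i' ≤ i - if α a ≤ t a then 1 else 0) (hh : h' ≤ h - if β a ≤ t a then 1 else 0) :
    update t a 0 ∈ thresholdShifts α β S W i' h' := by
  obtain ⟨ht0, hti, hth⟩ := ht
  refine ⟨fun r hr => ?_, ?_, ?_⟩
  · rcases eq_or_ne r a with rfl | hra
    · exact update_self ..
    · rw [update_of_ne hra, ht0 r (by simp [hra, hr])]
  · rw [card_filter_update_of_notMem haW]
    rw [card_filter_insert_of_notMem haW] at hti
    omega
  · rw [card_filter_update_of_notMem haS]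
    rw [card_filter_insert_of_notMem haS] at hth
    omega

theorem minThresholdCost_insert (hπ0 : π a 0 = 0) (hπ : Monotone (π a)) (hαβ : α a ≤ β a)
    (haS : a ∉ S) (haW : a ∉ W) (i h : ℕ) :
    minThresholdCost π α β (insert a S) (insert a W) i h =
      min (min (minThresholdCost π α β S W (i - 1) h + π a (α a))
          (minThresholdCost π α β S W (i - 1) (h - 1) + π a (β a)))
        (minThresholdCost π α β S W i h) := by
  refine le_antisymm (le_min (le_min ?_ ?_) ?_) (le_sInf ?_)
  · exact minThresholdCost_insert_le_add hπ0 haS haW (by rw [if_pos le_rfl]; omega)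
      (Nat.le_add_right h _)
  · exact minThresholdCost_insert_le_add hπ0 haS haW (by rw [if_pos hαβ]; omega)
      (by rw [if_pos le_rfl]; omega)
  · simpa only [hπ0, add_zero] using minThresholdCost_insert_le_add (v := 0) hπ0 haS haW
      (Nat.le_add_right i _) (Nat.le_add_right h _)
  rintro _ ⟨t, ht, rfl⟩
  have hcost := briberyCost_update_add π t a 0
  rw [hπ0, add_zero] at hcost
  have hle : ∀ {i' h'}, (i' ≤ i - if α a ≤ t a then 1 else 0) →
      (h' ≤ h - if β a ≤ t a then 1 else 0) →
      minThresholdCost π α β S W i' h' ≤ briberyCost π (update t a 0) := fun hi hh =>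
    sInf_le ⟨_, update_zero_mem_thresholdShifts haS haW ht hi hh, rfl⟩
  rcases le_or_gt (β a) (t a) with hβ | hβ
  · calc _ ≤ minThresholdCost π α β S W (i - 1) (h - 1) + π a (β a) :=
          (min_le_left _ _).trans (min_le_right _ _)
      _ ≤ briberyCost π (update t a 0) + π a (t a) :=
          add_le_add (hle (by simp [hαβ.trans hβ]) (by simp [hβ])) (hπ hβ)
      _ = briberyCost π t := hcost
  rcases le_or_gt (α a) (t a) with hα | hα
  · calc _ ≤ minThresholdCost π α β S W (i - 1) h + π a (α a) :=
          (min_le_left _ _).trans (min_le_left _ _)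
      _ ≤ briberyCost π (update t a 0) + π a (t a) :=
          add_le_add (hle (by simp [hα]) (by simp [not_le.2 hβ])) (hπ hα)
      _ = briberyCost π t := hcost
  · calc _ ≤ minThresholdCost π α β S W i h := min_le_right _ _
      _ ≤ briberyCost π (update t a 0) := hle (by simp [not_le.2 hα]) (by simp [not_le.2 hβ])
      _ ≤ briberyCost π t := hcost ▸ le_self_add

end ThresholdCost

section Election

variable {C : Type*} [DecidableEq C] {n : ℕ}

lemma shiftRank_self (rank : Fin n → C → ℕ) (p : C) (t : Fin n → ℕ) (r : Fin n) :
    shiftRank rank p t r p = max 1 (rank r p - t r) :=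
  if_pos rfl

def firstVotes {N : ℕ} (w : Fin N → Fin n) (j : ℕ) : Finset (Fin n) :=
  image w {x | (x : ℕ) < j}

lemma firstVotes_succ {N : ℕ} (w : Fin N → Fin n) (x : Fin N) :
    firstVotes w (x + 1) = insert (w x) (firstVotes w x) := by
  ext r
  simp [firstVotes, le_iff_eq_or_lt, or_and_right, exists_or, Fin.val_inj, eq_comm]

lemma notMem_firstVotes_self {N : ℕ} {w : Fin N → Fin n} (hw : Injective w) (x : Fin N) :
    w x ∉ firstVotes w x := by
  simp [firstVotes, hw.eq_iff]

lemma shiftRank_setOf_eq_thresholdShifts (rank : Fin n → C → ℕ) (p : C) {k : ℕ} (hk : 1 ≤ k)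
    (A : Finset (Fin n)) {N : ℕ} {w : Fin N → Fin n} (hw : Injective w) (i j h : ℕ) :
    {t : Fin n → ℕ | (∀ r : Fin n, r ∉ A ∪ image w {x | (x : ℕ) < j} → t r = 0) ∧
        i ≤ #{x : Fin N | (x : ℕ) < j ∧ shiftRank rank p t (w x) p ≤ k + 1} ∧
        h ≤ #{r ∈ A ∪ image w {x | (x : ℕ) < j} | shiftRank rank p t r p ≤ k}}
      = thresholdShifts (fun r => rank r p - (k + 1)) (fun r => rank r p - k)
          (A ∪ firstVotes w j) (firstVotes w j) i h := by
  ext t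
  have hsucc : ∀ r, max 1 (rank r p - t r) ≤ k + 1 ↔ rank r p - (k + 1) ≤ t r := fun r => by
    omega
  have hself : ∀ r, max 1 (rank r p - t r) ≤ k ↔ rank r p - k ≤ t r := fun r => by omega
  simp only [thresholdShifts, firstVotes, Set.mem_ofPred_eq, shiftRank_self, hsucc, hself,
    filter_image, card_image_of_injective _ hw, filter_filter]

end Election

/-- the dynamic-programming recurrence for the quantities `b(i,j,h)`. -/
theorem statement5 {C : Type*} [DecidableEq C] {n : ℕ}
    (rank : Fin n → C → ℕ)
    (π : Fin n → ℕ → ℕ∞) (hπ0 : ∀ i, π i 0 = 0) (hπmono : ∀ i, Monotone (π i))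
    (p c : C)
    (k : ℕ) (hk1 : 1 ≤ k)
    (A B : Finset (Fin n))
    (hA : A = Finset.univ.filter (fun i : Fin n => rank i c = k ∧ rank i p = k + 1))
    (hB : B = Finset.univ.filter (fun i : Fin n => rank i c = k ∧ k + 2 ≤ rank i p))
    (w : Fin B.card → Fin n) (hwinj : Function.Injective w) (hwB : ∀ x, w x ∈ B)
    (b : ℕ → ℕ → ℕ → ℕ∞)
    (hb : ∀ i j h : ℕ,
      b i j h = sInf ((fun t : Fin n → ℕ => briberyCost π t) ''
        {t : Fin n → ℕ |
          (∀ r : Fin n,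
              r ∉ A ∪ Finset.image w
                  (Finset.univ.filter (fun x : Fin B.card => (x : ℕ) < j)) →
              t r = 0) ∧
          i ≤ (Finset.univ.filter (fun x : Fin B.card =>
                  (x : ℕ) < j ∧ shiftRank rank p t (w x) p ≤ k + 1)).card ∧
          h ≤ ((A ∪ Finset.image w
                  (Finset.univ.filter (fun x : Fin B.card => (x : ℕ) < j))).filter
                  (fun r : Fin n => shiftRank rank p t r p ≤ k)).card}))
    (i j h : ℕ) (hi : 1 ≤ i) (hij : i ≤ j) (hj : j ≤ B.card) :
    b i j h =
      min (min
        (b (i - 1) (j - 1) h +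
          π (w ⟨j - 1, by omega⟩) (rank (w ⟨j - 1, by omega⟩) p - (k + 1)))
        (b (i - 1) (j - 1) (h - 1) +
          π (w ⟨j - 1, by omega⟩) (rank (w ⟨j - 1, by omega⟩) p - k)))
        (b i (j - 1) h) := by
  have hb' : ∀ i j h, b i j h = minThresholdCost π (fun r => rank r p - (k + 1))
      (fun r => rank r p - k) (A ∪ firstVotes w j) (firstVotes w j) i h := fun i j h => by
    rw [hb, shiftRank_setOf_eq_thresholdShifts rank p hk1 A hwinj]
    rfl
  set x : Fin B.card := ⟨j - 1, by omega⟩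
  have hW : firstVotes w j = insert (w x) (firstVotes w (j - 1)) := by
    rw [← firstVotes_succ]
    change _ = firstVotes w (j - 1 + 1)
    rw [Nat.sub_add_cancel (hi.trans hij)]
  have hxA : w x ∉ A := by
    have hxB := hwB x
    simp only [hA, hB, mem_filter, mem_univ, true_and] at hxB ⊢
    omega
  rw [hb', hb', hb', hb', hW, union_insert]
  have hxW : w x ∉ firstVotes w (j - 1) := notMem_firstVotes_self hwinj x
  exact minThresholdCost_insert (hπ0 _) (hπmono _) (by omega)
    (by rw [mem_union, not_or]; exact ⟨hxA, hxW⟩) hxW i h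
end

section
/- Let E be an election with Bucklin winning round k ≥ 2, and let p be a designated candidate. If t is a shift action such that the (k−1)-Approval score of p in shf(E,t) is at least ⌊n/2⌋+1, then p is the unique Bucklin winner and the unique simplified Bucklin winner of shf(E,t). -/
/-- Candidate `c` has a majority at round `k`. -/
def majAt {C : Type*} {n : ℕ} (rank : Fin n → C → ℕ) (k : ℕ) (c : C) : Prop :=
  n / 2 + 1 ≤ approvalScoreAt rank k c

/-- `k` is the Bucklin winning round. -/
def IsBucklinRound {C : Type*} {n : ℕ} (rank : Fin n → C → ℕ) (k : ℕ) : Prop :=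
  IsLeast {j : ℕ | ∃ c : C, majAt rank j c} k

/-- `c` is a Bucklin winner: `c` maximizes the `k_B`-Approval score, where `k_B` is the
Bucklin winning round. -/
def IsBucklinWinner {C : Type*} {n : ℕ} (rank : Fin n → C → ℕ) (c : C) : Prop :=
  ∃ k, IsBucklinRound rank k ∧
    ∀ c' : C, approvalScoreAt rank k c' ≤ approvalScoreAt rank k c

/-- `c` is a simplified Bucklin winner. -/
def IsSimpBucklinWinner {C : Type*} {n : ℕ} (rank : Fin n → C → ℕ) (c : C) : Prop :=
  ∃ k, IsBucklinRound rank k ∧ majAt rank k c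

/-! Shifting `p` upwards can only push every other candidate down, so no `c ≠ p` gains a
majority before round `k` of the shifted election. Since `p` has a majority at round `k - 1`
there, the Bucklin round of the shifted election is some `k' < k`, and `p` is the only
candidate with a majority at `k'`: a majority is more than half the voters, and every
other candidate stays below it. -/

section Bucklin

variable {C : Type*} {n : ℕ}

lemma exists_isBucklinRound_le {r : Fin n → C → ℕ} {j : ℕ} {c : C} (h : majAt r j c) :
    ∃ k ≤ j, IsBucklinRound r k :=
  have hj : j ∈ {j : ℕ | ∃ c : C, majAt r j c} := ⟨c, h⟩
  ⟨_, csInf_le' hj, isLeast_csInf ⟨j, hj⟩⟩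

lemma isSimpBucklinWinner_iff_eq {r : Fin n → C → ℕ} {k : ℕ} {p : C}
    (hround : IsBucklinRound r k) (hp : majAt r k p) (hother : ∀ c ≠ p, ¬ majAt r k c)
    (c : C) : IsSimpBucklinWinner r c ↔ c = p := by
  constructor
  · rintro ⟨k', hk', hc⟩
    rw [hk'.unique hround] at hc
    by_contra hcp
    exact hother c hcp hc
  · rintro rfl
    exact ⟨k, hround, hp⟩

lemma isBucklinWinner_iff_eq {r : Fin n → C → ℕ} {k : ℕ} {p : C}
    (hround : IsBucklinRound r k) (hp : majAt r k p) (hother : ∀ c ≠ p, ¬ majAt r k c)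
    (c : C) : IsBucklinWinner r c ↔ c = p := by
  constructor
  · rintro ⟨k', hk', hmax⟩
    rw [hk'.unique hround] at hmax
    by_contra hcp
    exact hother c hcp (hp.trans (hmax p))
  · rintro rfl
    refine ⟨k, hround, fun c' => ?_⟩
    by_cases hc' : c' = c
    · rw [hc']
    · have := hother c' hc'
      unfold majAt at this hp
      omega

variable [DecidableEq C]

lemma rank_le_shiftRank (rank : Fin n → C → ℕ) {p c : C} (t : Fin n → ℕ) (hc : c ≠ p)
    (i : Fin n) : rank i c ≤ shiftRank rank p t i c := by
  simp only [shiftRank, if_neg hc]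
  split <;> omega

lemma approvalScoreAt_shiftRank_le (rank : Fin n → C → ℕ) {p c : C} (t : Fin n → ℕ)
    (hc : c ≠ p) (j : ℕ) : approvalScoreAt (shiftRank rank p t) j c ≤ approvalScoreAt rank j c :=
  Finset.card_le_card fun i hi => by
    simp only [Finset.mem_filter, Finset.mem_univ, true_and] at hi ⊢
    exact (rank_le_shiftRank rank t hc i).trans hi

lemma not_majAt_shiftRank_of_lt {rank : Fin n → C → ℕ} {k j : ℕ} (hround : IsBucklinRound rank k)
    (hj : j < k) {p c : C} (t : Fin n → ℕ) (hc : c ≠ p) : ¬ majAt (shiftRank rank p t) j c :=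
  fun h => hj.not_ge (hround.2 ⟨c, h.trans (approvalScoreAt_shiftRank_le rank t hc j)⟩)

end Bucklin

theorem statement6_general {C : Type*} [DecidableEq C] {n : ℕ}
    (rank : Fin n → C → ℕ)
    (k : ℕ) (hk2 : 2 ≤ k) (hround : IsBucklinRound rank k)
    (p : C) (t : Fin n → ℕ)
    (hscore : n / 2 + 1 ≤ approvalScoreAt (shiftRank rank p t) (k - 1) p) :
    (IsBucklinWinner (shiftRank rank p t) p ∧
      ∀ c : C, IsBucklinWinner (shiftRank rank p t) c → c = p) ∧
    (IsSimpBucklinWinner (shiftRank rank p t) p ∧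
      ∀ c : C, IsSimpBucklinWinner (shiftRank rank p t) c → c = p) := by
  obtain ⟨k', hk'le, hround'⟩ := exists_isBucklinRound_le (show majAt _ _ p from hscore)
  have hother : ∀ c ≠ p, ¬ majAt (shiftRank rank p t) k' c :=
    fun c => not_majAt_shiftRank_of_lt hround (by omega) t
  have hp : majAt (shiftRank rank p t) k' p := by
    obtain ⟨c, hc⟩ := hround'.1
    by_cases hcp : c = p
    · exact hcp ▸ hc
    · exact absurd hc (hother c hcp)
  have hwin := isBucklinWinner_iff_eq hround' hp hother
  have hsimp := isSimpBucklinWinner_iff_eq hround' hp hother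
  exact ⟨⟨(hwin p).2 rfl, fun c => (hwin c).1⟩, ⟨(hsimp p).2 rfl, fun c => (hsimp c).1⟩⟩

/-- if the Bucklin winning round of `E` is `k ≥ 2` and a shift action gives
`p` a `(k−1)`-Approval score of at least `⌊n/2⌋+1` in the shifted election, then `p` is
the unique Bucklin winner and the unique simplified Bucklin winner of the shifted
election. -/
theorem statement6 {C : Type*} [Fintype C] [DecidableEq C] {n m : ℕ}
    (rank : Fin n → C → ℕ)
    (hcard : Fintype.card C = m)
    (hinj : ∀ i, Function.Injective (rank i))
    (hrange : ∀ i c, 1 ≤ rank i c ∧ rank i c ≤ m)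
    (k : ℕ) (hk2 : 2 ≤ k) (hround : IsBucklinRound rank k)
    (p : C) (t : Fin n → ℕ)
    (hscore : n / 2 + 1 ≤ approvalScoreAt (shiftRank rank p t) (k - 1) p) :
    (IsBucklinWinner (shiftRank rank p t) p ∧
      ∀ c : C, IsBucklinWinner (shiftRank rank p t) c → c = p) ∧
    (IsSimpBucklinWinner (shiftRank rank p t) p ∧
      ∀ c : C, IsSimpBucklinWinner (shiftRank rank p t) c → c = p) :=
  statement6_general rank k hk2 hround p t hscore
end

section
/- Let G be a graph with vertex set 𝒱 = {ν_1,…,ν_N}, where N ≥ 2, and let k be an integer with 0 ≤ k ≤ N−2. Let E be any election obtained by the negative-cost Fallback construction for (G,k). Then for every subset S ⊆ 𝒱 with |S| = k: the candidate p is a Fallback winner (equivalently, a simplified Fallback winner — and then in fact the unique winner) of the election obtained from E by setting the approval count of the voter x_i to 0 for every ν_i ∈ S and leaving all other votes unchanged, if and only if S is a dominating set of G. -/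
/-!
Every voter approves her top `N + 3` candidates, so a majority means `3N + 1` of the `6N`
voters. Once the `k` voters `x_s`, `s ∈ S`, approve nobody, `p` is ranked at position `N + 2` by
exactly `3N + 1` approving voters and by nobody higher. A vertex `ν` is ranked within the top
`N + 1` by the `2N + 1` voters `𝒱 ≻ … ≻ b` and, for each `i`, by exactly one of `x_i`, `x̄_i`
(by `x_i` iff `ν ∈ N[ν_i]`): that is `3N + 1` votes, and silencing `x_s` removes one of them
exactly when `ν ∈ N[ν_s]`. So a vertex not dominated by `S` reaches majority at round `N + 1`,
before `p` can; if `S` dominates, every vertex, `a`, `b` and the dummies stay below `3N + 1`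
approvals up to round `N + 2`, where `p` alone reaches majority.
-/

section Fallback

variable {C W : Type*} [Fintype W]

/-- Voters who approve `c` and rank `c` in their top `k` positions. -/
def fbApproversAt (rank : W → C → ℕ) (ℓcnt : W → ℕ) (k : ℕ) (c : C) : Finset W :=
  Finset.univ.filter (fun w => rank w c ≤ k ∧ rank w c ≤ ℓcnt w)

def fbApprovalScore (rank : W → C → ℕ) (ℓcnt : W → ℕ) (c : C) : ℕ :=
  (Finset.univ.filter (fun w => rank w c ≤ ℓcnt w)).card

/-- `c` reaches majority at round `k`. -/
def fbMajAt (rank : W → C → ℕ) (ℓcnt : W → ℕ) (k : ℕ) (c : C) : Prop :=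
  Fintype.card W / 2 + 1 ≤ (fbApproversAt rank ℓcnt k c).card

def IsFallbackWinner (rank : W → C → ℕ) (ℓcnt : W → ℕ) (c : C) : Prop :=
  (∃ kB, IsLeast {k : ℕ | ∃ c' : C, fbMajAt rank ℓcnt k c'} kB ∧
      ∀ c' : C, (fbApproversAt rank ℓcnt kB c').card ≤ (fbApproversAt rank ℓcnt kB c).card) ∨
  ((¬ ∃ k : ℕ, ∃ c' : C, fbMajAt rank ℓcnt k c') ∧
      ∀ c' : C, fbApprovalScore rank ℓcnt c' ≤ fbApprovalScore rank ℓcnt c)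

def IsSimpFallbackWinner (rank : W → C → ℕ) (ℓcnt : W → ℕ) (c : C) : Prop :=
  (∃ kB, IsLeast {k : ℕ | ∃ c' : C, fbMajAt rank ℓcnt k c'} kB ∧ fbMajAt rank ℓcnt kB c) ∨
  ((¬ ∃ k : ℕ, ∃ c' : C, fbMajAt rank ℓcnt k c') ∧
      ∀ c' : C, fbApprovalScore rank ℓcnt c' ≤ fbApprovalScore rank ℓcnt c)

end Fallback

def closedNbhd {V : Type*} [Fintype V] [DecidableEq V] (G : SimpleGraph V)
    [DecidableRel G.Adj] (v : V) : Finset V :=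
  insert v (G.neighborFinset v)

/-- The voters of the negative-cost Fallback construction: the voters `x_i` (`i ∈ 𝒱`),
the voters `x̄_i` (`i ∈ 𝒱`), `2N+1` voters, `N+k` voters, one voter, and `N−k−2` voters. -/
abbrev NegVoter (V : Type*) (N k : ℕ) :=
  (V ⊕ V) ⊕ ((Fin (2 * N + 1) ⊕ Fin (N + k)) ⊕ (Fin 1 ⊕ Fin (N - k - 2)))

/-- The voter `x_i` of the negative-cost construction. -/
def negX {V : Type*} (N k : ℕ) (i : V) : NegVoter V N k := Sum.inl (Sum.inl i)

/-- The voter `x̄_i` of the negative-cost construction. -/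
def negXbar {V : Type*} (N k : ℕ) (i : V) : NegVoter V N k := Sum.inl (Sum.inr i)

/-- One of the `2N+1` voters `𝒱 ≻ … ≻ b`. -/
def negY3 {V : Type*} (N k : ℕ) (j : Fin (2 * N + 1)) : NegVoter V N k :=
  Sum.inr (Sum.inl (Sum.inl j))

/-- One of the `N+k` voters `a ≻ … ≻ p ≻ b`. -/
def negY4 {V : Type*} (N k : ℕ) (j : Fin (N + k)) : NegVoter V N k :=
  Sum.inr (Sum.inl (Sum.inr j))

/-- The single voter `… ≻ p ≻ b`. -/
def negY5 {V : Type*} (N k : ℕ) (j : Fin 1) : NegVoter V N k :=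
  Sum.inr (Sum.inr (Sum.inl j))

/-- One of the `N−k−2` voters `… ≻ b`. -/
def negY6 {V : Type*} (N k : ℕ) (j : Fin (N - k - 2)) : NegVoter V N k :=
  Sum.inr (Sum.inr (Sum.inr j))

open Finset Function

section FallbackWinners

variable {C W : Type*} [Fintype W] {rank : W → C → ℕ} {ℓ : W → ℕ}

theorem mem_fbApproversAt {t : ℕ} {c : C} {w : W} :
    w ∈ fbApproversAt rank ℓ t c ↔ rank w c ≤ t ∧ rank w c ≤ ℓ w := by
  simp [fbApproversAt]

theorem isLeast_majorityRound {k₀ : ℕ} {c : C} (hc : fbMajAt rank ℓ k₀ c)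
    (hbefore : ∀ t < k₀, ∀ c', ¬ fbMajAt rank ℓ t c') :
    IsLeast {k | ∃ c', fbMajAt rank ℓ k c'} k₀ :=
  ⟨⟨c, hc⟩, fun _ ⟨c', hc'⟩ => not_lt.1 fun ht => hbefore _ ht c' hc'⟩

section UniqueMajority

variable {k₀ : ℕ} {p : C} (hp : fbMajAt rank ℓ k₀ p)
  (hbefore : ∀ t < k₀, ∀ c, ¬ fbMajAt rank ℓ t c) (hother : ∀ c ≠ p, ¬ fbMajAt rank ℓ k₀ c)
include hp hbefore hother

theorem isFallbackWinner_iff_of_unique_majority (c : C) :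
    IsFallbackWinner rank ℓ c ↔ c = p := by
  have hleast := isLeast_majorityRound hp hbefore
  constructor
  · rintro (⟨kB, hkB, hmax⟩ | ⟨hno, -⟩)
    · obtain rfl := hkB.unique hleast
      by_contra hcp
      have := hother c hcp
      have := hmax p
      unfold fbMajAt at *
      omega
    · exact (hno ⟨k₀, p, hp⟩).elim
  · rintro rfl
    refine Or.inl ⟨k₀, hleast, fun c' => ?_⟩
    by_cases hc' : c' = c
    · rw [hc']
    · have := hother c' hc'
      unfold fbMajAt at *
      omega

theorem isSimpFallbackWinner_iff_of_unique_majority (c : C) :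
    IsSimpFallbackWinner rank ℓ c ↔ c = p := by
  have hleast := isLeast_majorityRound hp hbefore
  constructor
  · rintro (⟨kB, hkB, hc⟩ | ⟨hno, -⟩)
    · obtain rfl := hkB.unique hleast
      by_contra hcp
      exact hother c hcp hc
    · exact (hno ⟨k₀, p, hp⟩).elim
  · rintro rfl
    exact Or.inl ⟨k₀, hleast, hp⟩

end UniqueMajority

variable {k₁ : ℕ} {c p : C}

theorem not_isFallbackWinner_of_majority (hc : fbMajAt rank ℓ k₁ c)
    (hp : ∀ t ≤ k₁, ¬ fbMajAt rank ℓ t p) : ¬ IsFallbackWinner rank ℓ p := by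
  rintro (⟨kB, hkB, hmax⟩ | ⟨hno, -⟩)
  · obtain ⟨c', hc'⟩ := hkB.1
    have hpB := hp kB (hkB.2 ⟨c, hc⟩)
    have := hmax c'
    unfold fbMajAt at hc' hpB
    omega
  · exact hno ⟨k₁, c, hc⟩

theorem not_isSimpFallbackWinner_of_majority (hc : fbMajAt rank ℓ k₁ c)
    (hp : ∀ t ≤ k₁, ¬ fbMajAt rank ℓ t p) : ¬ IsSimpFallbackWinner rank ℓ p := by
  rintro (⟨kB, hkB, hpB⟩ | ⟨hno, -⟩)
  · exact hp kB (hkB.2 ⟨c, hc⟩) hpB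
  · exact hno ⟨k₁, c, hc⟩

end FallbackWinners

theorem card_filter_univ_sum {α β : Type*} [Fintype α] [Fintype β] (q : α ⊕ β → Prop)
    [DecidablePred q] :
    #(univ.filter q) = #(univ.filter fun x => q (Sum.inl x)) +
      #(univ.filter fun y => q (Sum.inr y)) := by
  simp only [card_filter, Fintype.sum_sum_type]

section Ballots

variable {C : Type*} {r : C → ℕ}

/-- A ballot of the shape `a ≻ T ≻ dummies ≻ p ≻ b`: its top `m + 3` candidates. -/
theorem eq_or_mem_of_rank_le_of_ballot (hr : Injective r) (hpos : ∀ x, 1 ≤ r x) {m : ℕ}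
    {a p b c : C} {T : C → Prop} {D : Finset C} (ha : r a = 1)
    (hT : ∀ x, 2 ≤ r x → r x ≤ m + 1 → ¬ T x → x ∈ D) (hp : r p = m + 2) (hb : r b = m + 3)
    (hc : r c ≤ m + 3) : c = a ∨ T c ∨ c ∈ D ∨ c = p ∨ c = b := by
  obtain h | h | h | h : r c = 1 ∨ (2 ≤ r c ∧ r c ≤ m + 1) ∨ r c = m + 2 ∨ r c = m + 3 := by
    have := hpos c
    omega
  · exact Or.inl (hr (h.trans ha.symm))
  · by_cases hTc : T c
    · exact Or.inr (Or.inl hTc)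
    · exact Or.inr (Or.inr (Or.inl (hT c h.1 h.2 hTc)))
  · exact Or.inr (Or.inr (Or.inr (Or.inl (hr (h.trans hp.symm)))))
  · exact Or.inr (Or.inr (Or.inr (Or.inr (hr (h.trans hb.symm)))))

theorem exists_eq_of_rank_le_card {V : Type*} [Fintype V] (hr : Injective r)
    (hpos : ∀ x, 1 ≤ r x) {ι : V → C} (hι : Injective ι) (hle : ∀ v, r (ι v) ≤ Fintype.card V)
    {x : C} (hx : r x ≤ Fintype.card V) : ∃ v, x = ι v := by
  classical
  have himage : univ.image (r ∘ ι) = Icc 1 (Fintype.card V) := by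
    refine eq_of_subset_of_card_le (fun n hn => ?_) ?_
    · obtain ⟨v, -, rfl⟩ := mem_image.1 hn
      exact mem_Icc.2 ⟨hpos _, hle v⟩
    · rw [Nat.card_Icc, card_image_of_injective _ (hr.comp hι), card_univ]
      omega
  obtain ⟨v, -, hv⟩ := mem_image.1 (himage ▸ mem_Icc.2 ⟨hpos x, hx⟩)
  exact ⟨v, hr hv.symm⟩

end Ballots

/-- The negative-cost Fallback construction for `(G, k)`; every voter approves her top `N + 3`
candidates, which is how `card_dummy_approvers_le` is phrased. -/
structure IsNegCostConstruction {V C : Type*} [Fintype V] [DecidableEq V] (G : SimpleGraph V)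
    [DecidableRel G.Adj] (N k : ℕ) (a b p : C) (ι : V → C) (D : Finset C)
    (rank : NegVoter V N k → C → ℕ) : Prop where
  card_vertices : Fintype.card V = N
  add_two_le : k + 2 ≤ N
  injective_ι : Injective ι
  a_ne_b : a ≠ b
  a_ne_p : a ≠ p
  b_ne_p : b ≠ p
  a_not_mem : a ∉ D
  p_not_mem : p ∉ D
  ι_ne_a : ∀ v, ι v ≠ a
  ι_ne_b : ∀ v, ι v ≠ b
  ι_ne_p : ∀ v, ι v ≠ p
  ι_not_mem : ∀ v, ι v ∉ D
  cover : ∀ x : C, (∃ v, x = ι v) ∨ x = a ∨ x = b ∨ x = p ∨ x ∈ D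
  injective_rank : ∀ w, Injective (rank w)
  one_le_rank : ∀ w x, 1 ≤ rank w x
  ballot_x : ∀ i : V,
    rank (negX N k i) a = 1 ∧
    (∀ v ∈ closedNbhd G i, rank (negX N k i) (ι v) ≤ (closedNbhd G i).card + 1) ∧
    (∀ x : C, 2 ≤ rank (negX N k i) x → rank (negX N k i) x ≤ N + 1 →
      (∀ v ∈ closedNbhd G i, x ≠ ι v) → x ∈ D) ∧
    rank (negX N k i) p = N + 2 ∧ rank (negX N k i) b = N + 3
  ballot_xbar : ∀ i : V,
    rank (negXbar N k i) a = 1 ∧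
    (∀ v ∈ Finset.univ \ closedNbhd G i,
      rank (negXbar N k i) (ι v) ≤ (Finset.univ \ closedNbhd G i).card + 1) ∧
    (∀ x : C, 2 ≤ rank (negXbar N k i) x → rank (negXbar N k i) x ≤ N + 1 →
      (∀ v ∈ Finset.univ \ closedNbhd G i, x ≠ ι v) → x ∈ D) ∧
    rank (negXbar N k i) p = N + 2 ∧ rank (negXbar N k i) b = N + 3
  ballot_y3 : ∀ j : Fin (2 * N + 1),
    (∀ v : V, rank (negY3 N k j) (ι v) ≤ N) ∧
    (∀ x : C, N + 1 ≤ rank (negY3 N k j) x → rank (negY3 N k j) x ≤ N + 2 → x ∈ D) ∧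
    rank (negY3 N k j) b = N + 3
  ballot_y4 : ∀ j : Fin (N + k),
    rank (negY4 N k j) a = 1 ∧
    (∀ x : C, 2 ≤ rank (negY4 N k j) x → rank (negY4 N k j) x ≤ N + 1 → x ∈ D) ∧
    rank (negY4 N k j) p = N + 2 ∧ rank (negY4 N k j) b = N + 3
  ballot_y5 : ∀ j : Fin 1,
    (∀ x : C, rank (negY5 N k j) x ≤ N + 1 → x ∈ D) ∧
    rank (negY5 N k j) p = N + 2 ∧ rank (negY5 N k j) b = N + 3
  ballot_y6 : ∀ j : Fin (N - k - 2),
    (∀ x : C, rank (negY6 N k j) x ≤ N + 2 → x ∈ D) ∧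
    rank (negY6 N k j) b = N + 3
  card_dummy_approvers_le : ∀ d ∈ D,
    (Finset.univ.filter (fun w : NegVoter V N k => rank w d ≤ N + 3)).card ≤ 1

def negApprovalCount {V : Type*} [DecidableEq V] (S : Finset V) (N k : ℕ) :
    NegVoter V N k → ℕ
  | Sum.inl (Sum.inl i) => if i ∈ S then 0 else N + 3
  | _ => N + 3

section NegVoters

variable {V : Type*} [DecidableEq V] {N k : ℕ}

theorem card_eq_sum_blocks [Fintype V] (U : Finset (NegVoter V N k)) :
    #U = #(univ.filter (negX N k · ∈ U)) + #(univ.filter (negXbar N k · ∈ U)) +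
      #(univ.filter (negY3 N k · ∈ U)) + #(univ.filter (negY4 N k · ∈ U)) +
      #(univ.filter (negY5 N k · ∈ U)) + #(univ.filter (negY6 N k · ∈ U)) := by
  conv_lhs => rw [← filter_univ_mem U]
  simp only [card_filter_univ_sum, add_assoc]
  rfl

variable {S : Finset V} {i : V}

@[simp] theorem negApprovalCount_negX :
    negApprovalCount S N k (negX N k i) = if i ∈ S then 0 else N + 3 := rfl
@[simp] theorem negApprovalCount_negXbar : negApprovalCount S N k (negXbar N k i) = N + 3 := rfl
@[simp] theorem negApprovalCount_negY3 (j) : negApprovalCount S N k (negY3 N k j) = N + 3 := rfl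
@[simp] theorem negApprovalCount_negY4 (j) : negApprovalCount S N k (negY4 N k j) = N + 3 := rfl
@[simp] theorem negApprovalCount_negY5 (j) : negApprovalCount S N k (negY5 N k j) = N + 3 := rfl

theorem negApprovalCount_le (w : NegVoter V N k) : negApprovalCount S N k w ≤ N + 3 := by
  unfold negApprovalCount
  split <;> (try split_ifs) <;> omega

theorem eq_negApprovalCount {ℓ : NegVoter V N k → ℕ} (hS : ∀ i ∈ S, ℓ (negX N k i) = 0)
    (hrest : ∀ w, (∀ i ∈ S, w ≠ negX N k i) → ℓ w = N + 3) : ℓ = negApprovalCount S N k := by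
  funext w
  by_cases hw : ∃ i ∈ S, w = negX N k i
  · obtain ⟨i, hi, rfl⟩ := hw
    simp [hS i hi, hi]
  · push Not at hw
    rw [hrest w hw]
    rcases w with ((i | i) | _)
    · exact (if_neg fun hi => hw i hi rfl).symm
    all_goals rfl

theorem rank_le_of_mem_approvers {C : Type*} [Fintype V] {t : ℕ}
    {rank : NegVoter V N k → C → ℕ} {w : NegVoter V N k} {c : C}
    (hw : w ∈ fbApproversAt rank (negApprovalCount S N k) t c) :
    rank w c ≤ t ∧ rank w c ≤ N + 3 :=
  have hw := mem_fbApproversAt.1 hw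
  ⟨hw.1, hw.2.trans (negApprovalCount_le w)⟩

end NegVoters

namespace IsNegCostConstruction

variable {V C : Type*} [Fintype V] [DecidableEq V] {G : SimpleGraph V} [DecidableRel G.Adj]
  {N k : ℕ} {a b p : C} {ι : V → C} {D : Finset C} {rank : NegVoter V N k → C → ℕ}
  (hE : IsNegCostConstruction G N k a b p ι D rank) {S : Finset V} {t : ℕ}
include hE

theorem fbMajAt_iff {ℓ : NegVoter V N k → ℕ} {c : C} :
    fbMajAt rank ℓ t c ↔ 3 * N + 1 ≤ #(fbApproversAt rank ℓ t c) := by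
  have hcard : Fintype.card (NegVoter V N k) = 6 * N := by
    simp only [NegVoter, Fintype.card_sum, Fintype.card_fin, hE.card_vertices]
    have := hE.add_two_le
    omega
  rw [fbMajAt, hcard]
  omega

theorem top_negX {i : V} {c : C} (h : rank (negX N k i) c ≤ N + 3) :
    c = a ∨ (∃ v ∈ closedNbhd G i, c = ι v) ∨ c ∈ D ∨ c = p ∨ c = b :=
  have ⟨ha, _, hT, hp, hb⟩ := hE.ballot_x i
  eq_or_mem_of_rank_le_of_ballot (T := fun c => ∃ v ∈ closedNbhd G i, c = ι v)
    (hE.injective_rank _) (hE.one_le_rank _) ha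
    (fun x h₂ h₃ hx => hT x h₂ h₃ fun v hv hxv => hx ⟨v, hv, hxv⟩) hp hb h

theorem top_negXbar {i : V} {c : C} (h : rank (negXbar N k i) c ≤ N + 3) :
    c = a ∨ (∃ v ∈ univ \ closedNbhd G i, c = ι v) ∨ c ∈ D ∨ c = p ∨ c = b :=
  have ⟨ha, _, hT, hp, hb⟩ := hE.ballot_xbar i
  eq_or_mem_of_rank_le_of_ballot (T := fun c => ∃ v ∈ univ \ closedNbhd G i, c = ι v)
    (hE.injective_rank _) (hE.one_le_rank _) ha
    (fun x h₂ h₃ hx => hT x h₂ h₃ fun v hv hxv => hx ⟨v, hv, hxv⟩) hp hb h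

theorem top_negY3 {j : Fin (2 * N + 1)} {c : C} (h : rank (negY3 N k j) c ≤ N + 3) :
    (∃ v, c = ι v) ∨ c ∈ D ∨ c = b := by
  obtain ⟨hι, hD, hb⟩ := hE.ballot_y3 j
  by_cases hN : rank (negY3 N k j) c ≤ N
  · exact Or.inl (exists_eq_of_rank_le_card (hE.injective_rank _) (hE.one_le_rank _)
      hE.injective_ι (fun v => (hι v).trans_eq hE.card_vertices.symm)
      (hN.trans_eq hE.card_vertices.symm))
  by_cases hN2 : rank (negY3 N k j) c ≤ N + 2
  · exact Or.inr (Or.inl (hD c (by omega) hN2))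
  · exact Or.inr (Or.inr (hE.injective_rank (negY3 N k j) (by omega)))

theorem top_negY4 {j : Fin (N + k)} {c : C} (h : rank (negY4 N k j) c ≤ N + 3) :
    c = a ∨ c ∈ D ∨ c = p ∨ c = b := by
  have ⟨ha, hD, hp, hb⟩ := hE.ballot_y4 j
  simpa using eq_or_mem_of_rank_le_of_ballot (T := fun _ => False) (hE.injective_rank _)
    (hE.one_le_rank _) ha (fun x h₂ h₃ _ => hD x h₂ h₃) hp hb h

theorem top_negY5 {j : Fin 1} {c : C} (h : rank (negY5 N k j) c ≤ N + 3) :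
    c ∈ D ∨ c = p ∨ c = b := by
  obtain ⟨hD, hp, hb⟩ := hE.ballot_y5 j
  by_cases hN : rank (negY5 N k j) c ≤ N + 1
  · exact Or.inl (hD c hN)
  by_cases hN2 : rank (negY5 N k j) c = N + 2
  · exact Or.inr (Or.inl (hE.injective_rank _ (hN2.trans hp.symm)))
  · exact Or.inr (Or.inr (hE.injective_rank (negY5 N k j) (by omega)))

theorem top_negY6 {j : Fin (N - k - 2)} {c : C} (h : rank (negY6 N k j) c ≤ N + 3) :
    c ∈ D ∨ c = b := by
  obtain ⟨hD, hb⟩ := hE.ballot_y6 j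
  by_cases hN : rank (negY6 N k j) c ≤ N + 2
  · exact Or.inl (hD c hN)
  · exact Or.inr (hE.injective_rank (negY6 N k j) (by omega))

theorem rank_b (w : NegVoter V N k) : rank w b = N + 3 := by
  rcases w with ((i | i) | ((j | j) | (j | j)))
  exacts [(hE.ballot_x i).2.2.2.2, (hE.ballot_xbar i).2.2.2.2, (hE.ballot_y3 j).2.2,
    (hE.ballot_y4 j).2.2.2, (hE.ballot_y5 j).2.2, (hE.ballot_y6 j).2]

theorem le_rank_p (w : NegVoter V N k) : N + 2 ≤ rank w p := by
  rcases w with ((i | i) | ((j | j) | (j | j)))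
  · exact (hE.ballot_x i).2.2.2.1.ge
  · exact (hE.ballot_xbar i).2.2.2.1.ge
  · change N + 2 ≤ rank (negY3 N k j) p
    by_contra h
    rcases hE.top_negY3 (j := j) (c := p) (by omega) with ⟨v, hv⟩ | hp | hp
    exacts [hE.ι_ne_p v hv.symm, hE.p_not_mem hp, hE.b_ne_p hp.symm]
  · exact (hE.ballot_y4 j).2.2.1.ge
  · exact (hE.ballot_y5 j).2.1.ge
  · change N + 2 ≤ rank (negY6 N k j) p
    by_contra h
    rcases hE.top_negY6 (j := j) (c := p) (by omega) with hp | hp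
    exacts [hE.p_not_mem hp, hE.b_ne_p hp.symm]

theorem not_mem_approvers_negX {i : V} (hi : i ∈ S) {c : C} :
    negX N k i ∉ fbApproversAt rank (negApprovalCount S N k) t c := fun hw => by
  have := (mem_fbApproversAt.1 hw).2
  have := hE.one_le_rank (negX N k i) c
  simp only [negApprovalCount_negX, hi, if_true] at *
  omega

theorem approvers_b_eq_empty {ℓ : NegVoter V N k → ℕ} (ht : t ≤ N + 2) :
    fbApproversAt rank ℓ t b = ∅ :=
  eq_empty_of_forall_notMem fun w hw => by
    have := (mem_fbApproversAt.1 hw).1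
    rw [hE.rank_b] at this
    omega

theorem approvers_p_eq_empty {ℓ : NegVoter V N k → ℕ} (ht : t ≤ N + 1) :
    fbApproversAt rank ℓ t p = ∅ :=
  eq_empty_of_forall_notMem fun w hw => by
    have := (mem_fbApproversAt.1 hw).1
    have := hE.le_rank_p w
    omega

theorem card_approvers_dummy_le {d : C} (hd : d ∈ D) :
    #(fbApproversAt rank (negApprovalCount S N k) t d) ≤ 1 :=
  (card_le_card fun _ hw => mem_filter.2 ⟨mem_univ _, (rank_le_of_mem_approvers hw).2⟩).trans
    (hE.card_dummy_approvers_le d hd)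

theorem le_card_approvers_p (hS : #S = k) :
    3 * N + 1 ≤ #(fbApproversAt rank (negApprovalCount S N k) (N + 2) p) := by
  set U := fbApproversAt rank (negApprovalCount S N k) (N + 2) p
  have hx : Sᶜ ⊆ univ.filter (negX N k · ∈ U) := fun i hi =>
    mem_filter.2 ⟨mem_univ _, mem_fbApproversAt.2 <| by
      simp [(hE.ballot_x i).2.2.2.1, mem_compl.1 hi]⟩
  have hxbar : univ.filter (negXbar N k · ∈ U) = univ := filter_true_of_mem fun i _ =>
    mem_fbApproversAt.2 <| by simp [(hE.ballot_xbar i).2.2.2.1]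
  have hy4 : univ.filter (negY4 N k · ∈ U) = univ := filter_true_of_mem fun j _ =>
    mem_fbApproversAt.2 <| by simp [(hE.ballot_y4 j).2.2.1]
  have hy5 : univ.filter (negY5 N k · ∈ U) = univ := filter_true_of_mem fun j _ =>
    mem_fbApproversAt.2 <| by simp [(hE.ballot_y5 j).2.1]
  have := card_le_card hx
  rw [card_compl, hS, hE.card_vertices] at this
  rw [card_eq_sum_blocks U, hxbar, hy4, hy5]
  simp only [card_univ, Fintype.card_fin, hE.card_vertices]
  have := hE.add_two_le
  omega

theorem card_approvers_a_le (hS : #S = k) :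
    #(fbApproversAt rank (negApprovalCount S N k) t a) ≤ 3 * N := by
  set U := fbApproversAt rank (negApprovalCount S N k) t a
  have hx : univ.filter (negX N k · ∈ U) ⊆ Sᶜ := fun i hi =>
    mem_compl.2 fun hiS => hE.not_mem_approvers_negX hiS (mem_filter.1 hi).2
  have hy3 : #(univ.filter (negY3 N k · ∈ U)) = 0 := card_filter_eq_zero_iff.2 fun j _ hj => by
    rcases hE.top_negY3 (rank_le_of_mem_approvers hj).2 with ⟨v, hv⟩ | h | h
    exacts [hE.ι_ne_a v hv.symm, hE.a_not_mem h, hE.a_ne_b h]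
  have hy5 : #(univ.filter (negY5 N k · ∈ U)) = 0 := card_filter_eq_zero_iff.2 fun j _ hj => by
    rcases hE.top_negY5 (rank_le_of_mem_approvers hj).2 with h | h | h
    exacts [hE.a_not_mem h, hE.a_ne_p h, hE.a_ne_b h]
  have hy6 : #(univ.filter (negY6 N k · ∈ U)) = 0 := card_filter_eq_zero_iff.2 fun j _ hj => by
    rcases hE.top_negY6 (rank_le_of_mem_approvers hj).2 with h | h
    exacts [hE.a_not_mem h, hE.a_ne_b h]
  have := card_le_card hx
  have := card_filter_le univ (negXbar N k · ∈ U)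
  have := card_filter_le univ (negY4 N k · ∈ U)
  simp only [card_compl, card_univ, Fintype.card_fin, hE.card_vertices, hS] at *
  rw [card_eq_sum_blocks U, hy3, hy5, hy6]
  have := hE.add_two_le
  omega

theorem mem_closedNbhd_of_rank_x_le {i v : V} (h : rank (negX N k i) (ι v) ≤ N + 3) :
    v ∈ closedNbhd G i := by
  rcases hE.top_negX h with h | ⟨u, hu, h⟩ | h | h | h
  exacts [(hE.ι_ne_a v h).elim, hE.injective_ι h ▸ hu, (hE.ι_not_mem v h).elim,
    (hE.ι_ne_p v h).elim, (hE.ι_ne_b v h).elim]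

theorem not_mem_closedNbhd_of_rank_xbar_le {i v : V} (h : rank (negXbar N k i) (ι v) ≤ N + 3) :
    v ∉ closedNbhd G i := by
  rcases hE.top_negXbar h with h | ⟨u, hu, h⟩ | h | h | h
  exacts [(hE.ι_ne_a v h).elim, hE.injective_ι h ▸ (mem_sdiff.1 hu).2, (hE.ι_not_mem v h).elim,
    (hE.ι_ne_p v h).elim, (hE.ι_ne_b v h).elim]

theorem card_approvers_ι_le {s v : V} (hs : s ∈ S) (hvs : v ∈ closedNbhd G s) :
    #(fbApproversAt rank (negApprovalCount S N k) t (ι v)) ≤ 3 * N := by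
  set U := fbApproversAt rank (negApprovalCount S N k) t (ι v)
  set A := univ.filter (v ∈ closedNbhd G ·)
  have hsA : s ∈ A := mem_filter.2 ⟨mem_univ _, hvs⟩
  have hx : univ.filter (negX N k · ∈ U) ⊆ A.erase s := fun i hi => by
    have hw := (mem_filter.1 hi).2
    refine mem_erase.2 ⟨?_, mem_filter.2 ⟨mem_univ _,
      hE.mem_closedNbhd_of_rank_x_le (rank_le_of_mem_approvers hw).2⟩⟩
    rintro rfl
    exact hE.not_mem_approvers_negX hs hw
  have hxbar : univ.filter (negXbar N k · ∈ U) ⊆ Aᶜ := fun i hi =>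
    mem_compl.2 fun hiA => hE.not_mem_closedNbhd_of_rank_xbar_le
      (rank_le_of_mem_approvers (mem_filter.1 hi).2).2 (mem_filter.1 hiA).2
  have hy4 : #(univ.filter (negY4 N k · ∈ U)) = 0 := card_filter_eq_zero_iff.2 fun j _ hj => by
    rcases hE.top_negY4 (rank_le_of_mem_approvers hj).2 with h | h | h | h
    exacts [hE.ι_ne_a v h, hE.ι_not_mem v h, hE.ι_ne_p v h, hE.ι_ne_b v h]
  have hy5 : #(univ.filter (negY5 N k · ∈ U)) = 0 := card_filter_eq_zero_iff.2 fun j _ hj => by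
    rcases hE.top_negY5 (rank_le_of_mem_approvers hj).2 with h | h | h
    exacts [hE.ι_not_mem v h, hE.ι_ne_p v h, hE.ι_ne_b v h]
  have hy6 : #(univ.filter (negY6 N k · ∈ U)) = 0 := card_filter_eq_zero_iff.2 fun j _ hj => by
    rcases hE.top_negY6 (rank_le_of_mem_approvers hj).2 with h | h
    exacts [hE.ι_not_mem v h, hE.ι_ne_b v h]
  have := card_le_card hx
  have := card_le_card hxbar
  have := card_filter_le univ (negY3 N k · ∈ U)
  have := card_pos.2 ⟨s, hsA⟩
  have := card_le_univ A
  simp only [card_erase_of_mem hsA, card_compl, card_univ, Fintype.card_fin,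
    hE.card_vertices] at *
  rw [card_eq_sum_blocks U, hy4, hy5, hy6]
  omega

theorem le_card_approvers_ι {v : V} (hv : ∀ s ∈ S, v ∉ closedNbhd G s) :
    3 * N + 1 ≤ #(fbApproversAt rank (negApprovalCount S N k) (N + 1) (ι v)) := by
  set U := fbApproversAt rank (negApprovalCount S N k) (N + 1) (ι v)
  set A := univ.filter (v ∈ closedNbhd G ·)
  have hsize (s : Finset V) : #s ≤ N := hE.card_vertices ▸ card_le_univ s
  have hx : A ⊆ univ.filter (negX N k · ∈ U) := fun i hi => by
    have hvi := (mem_filter.1 hi).2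
    have hiS : i ∉ S := fun hiS => hv i hiS hvi
    have := (hE.ballot_x i).2.1 v hvi
    have := hsize (closedNbhd G i)
    refine mem_filter.2 ⟨mem_univ _, mem_fbApproversAt.2 ?_⟩
    simp only [negApprovalCount_negX, hiS, if_false]
    omega
  have hxbar : Aᶜ ⊆ univ.filter (negXbar N k · ∈ U) := fun i hi => by
    have hvi : v ∈ univ \ closedNbhd G i := by simpa [A] using hi
    have := (hE.ballot_xbar i).2.1 v hvi
    have := hsize (univ \ closedNbhd G i)
    refine mem_filter.2 ⟨mem_univ _, mem_fbApproversAt.2 ?_⟩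
    simp only [negApprovalCount_negXbar]
    omega
  have hy3 : univ.filter (negY3 N k · ∈ U) = univ := filter_true_of_mem fun j _ =>
    mem_fbApproversAt.2 <| by
      have := (hE.ballot_y3 j).1 v
      simp only [negApprovalCount_negY3]
      omega
  have := card_le_card hx
  have := card_le_card hxbar
  have := hsize A
  rw [card_eq_sum_blocks U, hy3]
  simp only [card_compl, card_univ, Fintype.card_fin, hE.card_vertices] at *
  omega

theorem card_approvers_le_of_ne_p (hS : #S = k) (hdom : ∀ v, ∃ s ∈ S, v ∈ closedNbhd G s)
    {c : C} (hc : c ≠ p) (ht : t ≤ N + 2) :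
    #(fbApproversAt rank (negApprovalCount S N k) t c) ≤ 3 * N := by
  rcases hE.cover c with ⟨v, rfl⟩ | rfl | rfl | rfl | hd
  · obtain ⟨s, hs, hvs⟩ := hdom v
    exact hE.card_approvers_ι_le hs hvs
  · exact hE.card_approvers_a_le hS
  · simp [hE.approvers_b_eq_empty ht]
  · exact (hc rfl).elim
  · have := hE.add_two_le
    exact (hE.card_approvers_dummy_le hd).trans (by omega)

theorem unique_majority_of_dominating (hS : #S = k)
    (hdom : ∀ v, ∃ s ∈ S, v ∈ closedNbhd G s) :
    fbMajAt rank (negApprovalCount S N k) (N + 2) p ∧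
      (∀ t < N + 2, ∀ c, ¬ fbMajAt rank (negApprovalCount S N k) t c) ∧
      ∀ c ≠ p, ¬ fbMajAt rank (negApprovalCount S N k) (N + 2) c := by
  refine ⟨hE.fbMajAt_iff.2 (hE.le_card_approvers_p hS), fun t ht c => ?_, fun c hc => ?_⟩
  · rw [hE.fbMajAt_iff, not_le]
    by_cases hc : c = p
    · rw [hc, hE.approvers_p_eq_empty (by omega), card_empty]
      omega
    · have := hE.card_approvers_le_of_ne_p hS hdom hc ht.le
      omega
  · rw [hE.fbMajAt_iff, not_le]
    have := hE.card_approvers_le_of_ne_p hS hdom hc le_rfl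
    omega

theorem not_fbMajAt_p {ℓ : NegVoter V N k → ℕ} (ht : t ≤ N + 1) :
    ¬ fbMajAt rank ℓ t p := by
  rw [hE.fbMajAt_iff, hE.approvers_p_eq_empty ht, card_empty]
  omega

end IsNegCostConstruction

theorem statement8_general {V C : Type*} [Fintype V] [DecidableEq V] [Fintype C]
    (G : SimpleGraph V) [DecidableRel G.Adj]
    (N k : ℕ) (hN : Fintype.card V = N) (hNk : k + 2 ≤ N)
    (a b p : C) (ι : V → C) (D : Finset C)
    (hι : Function.Injective ι)
    (hab : a ≠ b) (hap : a ≠ p) (hbp : b ≠ p)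
    (haD : a ∉ D) (hpD : p ∉ D)
    (hιa : ∀ v, ι v ≠ a) (hιb : ∀ v, ι v ≠ b) (hιp : ∀ v, ι v ≠ p)
    (hιD : ∀ v, ι v ∉ D)
    (hcover : ∀ x : C, (∃ v, x = ι v) ∨ x = a ∨ x = b ∨ x = p ∨ x ∈ D)
    (rank : NegVoter V N k → C → ℕ)
    (hinj : ∀ w, Function.Injective (rank w))
    (hrange : ∀ w x, 1 ≤ rank w x ∧ rank w x ≤ Fintype.card C)
    (ℓcnt : NegVoter V N k → ℕ)
    (hℓ : ∀ w, ℓcnt w = N + 3)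
    -- the voters `x_i : a ≻ N[ν_i] ≻ dummies ≻ p ≻ b |`
    (hx : ∀ i : V,
      rank (negX N k i) a = 1 ∧
      (∀ v ∈ closedNbhd G i, rank (negX N k i) (ι v) ≤ (closedNbhd G i).card + 1) ∧
      (∀ x : C, 2 ≤ rank (negX N k i) x → rank (negX N k i) x ≤ N + 1 →
        (∀ v ∈ closedNbhd G i, x ≠ ι v) → x ∈ D) ∧
      rank (negX N k i) p = N + 2 ∧ rank (negX N k i) b = N + 3)
    -- the voters `x̄_i : a ≻ 𝒱∖N[ν_i] ≻ dummies ≻ p ≻ b |`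
    (hxbar : ∀ i : V,
      rank (negXbar N k i) a = 1 ∧
      (∀ v ∈ Finset.univ \ closedNbhd G i,
        rank (negXbar N k i) (ι v) ≤ (Finset.univ \ closedNbhd G i).card + 1) ∧
      (∀ x : C, 2 ≤ rank (negXbar N k i) x → rank (negXbar N k i) x ≤ N + 1 →
        (∀ v ∈ Finset.univ \ closedNbhd G i, x ≠ ι v) → x ∈ D) ∧
      rank (negXbar N k i) p = N + 2 ∧ rank (negXbar N k i) b = N + 3)
    -- the `2N+1` voters `𝒱 ≻ dummies ≻ b |`
    (h3 : ∀ j : Fin (2 * N + 1),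
      (∀ v : V, rank (negY3 N k j) (ι v) ≤ N) ∧
      (∀ x : C, N + 1 ≤ rank (negY3 N k j) x → rank (negY3 N k j) x ≤ N + 2 → x ∈ D) ∧
      rank (negY3 N k j) b = N + 3)
    -- the `N+k` voters `a ≻ dummies ≻ p ≻ b |`
    (h4 : ∀ j : Fin (N + k),
      rank (negY4 N k j) a = 1 ∧
      (∀ x : C, 2 ≤ rank (negY4 N k j) x → rank (negY4 N k j) x ≤ N + 1 → x ∈ D) ∧
      rank (negY4 N k j) p = N + 2 ∧ rank (negY4 N k j) b = N + 3)
    -- the voter `dummies ≻ p ≻ b |`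
    (h5 : ∀ j : Fin 1,
      (∀ x : C, rank (negY5 N k j) x ≤ N + 1 → x ∈ D) ∧
      rank (negY5 N k j) p = N + 2 ∧ rank (negY5 N k j) b = N + 3)
    -- the `N−k−2` voters `dummies ≻ b |`
    (h6 : ∀ j : Fin (N - k - 2),
      (∀ x : C, rank (negY6 N k j) x ≤ N + 2 → x ∈ D) ∧
      rank (negY6 N k j) b = N + 3)
    -- each dummy candidate is approved by at most one voter
    (hdummy : ∀ d ∈ D,
      (Finset.univ.filter (fun w : NegVoter V N k => rank w d ≤ ℓcnt w)).card ≤ 1)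
    -- the bribed election: the approval count of `x_i` is set to `0` for every `ν_i ∈ S`
    (S : Finset V) (hS : S.card = k)
    (ℓ' : NegVoter V N k → ℕ)
    (hℓ'S : ∀ i ∈ S, ℓ' (negX N k i) = 0)
    (hℓ'rest : ∀ w : NegVoter V N k, (∀ i ∈ S, w ≠ negX N k i) → ℓ' w = ℓcnt w) :
    (IsFallbackWinner rank ℓ' p ↔ ∀ v : V, ∃ s ∈ S, v ∈ closedNbhd G s) ∧
    (IsSimpFallbackWinner rank ℓ' p ↔ ∀ v : V, ∃ s ∈ S, v ∈ closedNbhd G s) ∧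
    ((∀ v : V, ∃ s ∈ S, v ∈ closedNbhd G s) →
      (∀ c : C, IsFallbackWinner rank ℓ' c → c = p) ∧
      (∀ c : C, IsSimpFallbackWinner rank ℓ' c → c = p)) := by
  have hE : IsNegCostConstruction G N k a b p ι D rank :=
    ⟨hN, hNk, hι, hab, hap, hbp, haD, hpD, hιa, hιb, hιp, hιD, hcover, hinj,
      fun w x => (hrange w x).1, hx, hxbar, h3, h4, h5, h6,
      fun d hd => by simpa only [hℓ] using hdummy d hd⟩
  obtain rfl : ℓ' = negApprovalCount S N k :=
    eq_negApprovalCount hℓ'S fun w hw => (hℓ'rest w hw).trans (hℓ w)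
  by_cases hdom : ∀ v : V, ∃ s ∈ S, v ∈ closedNbhd G s
  · obtain ⟨hp, hbefore, hother⟩ := hE.unique_majority_of_dominating hS hdom
    have hF := isFallbackWinner_iff_of_unique_majority hp hbefore hother
    have hSF := isSimpFallbackWinner_iff_of_unique_majority hp hbefore hother
    exact ⟨iff_of_true ((hF p).2 rfl) hdom, iff_of_true ((hSF p).2 rfl) hdom,
      fun _ => ⟨fun c => (hF c).1, fun c => (hSF c).1⟩⟩
  · obtain ⟨v, hv⟩ : ∃ v : V, ∀ s ∈ S, v ∉ closedNbhd G s := by simpa using hdom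
    have hmaj := hE.fbMajAt_iff.2 (hE.le_card_approvers_ι hv)
    exact ⟨iff_of_false (not_isFallbackWinner_of_majority hmaj fun _ => hE.not_fbMajAt_p) hdom,
      iff_of_false (not_isSimpFallbackWinner_of_majority hmaj fun _ => hE.not_fbMajAt_p) hdom,
      fun h => (hdom h).elim⟩

/-- in the negative-cost Fallback construction for `(G,k)`, for every set `S`
of `k` vertices, setting the approval count of the voter `x_i` to `0` for every `ν_i ∈ S`
makes `p` a Fallback winner (equivalently, a simplified Fallback winner — and then in fact
the unique winner) if and only if `S` is a dominating set of `G`. -/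
theorem statement8 {V C : Type*} [Fintype V] [DecidableEq V] [Fintype C] [DecidableEq C]
    (G : SimpleGraph V) [DecidableRel G.Adj]
    (N k : ℕ) (hN : Fintype.card V = N) (hNk : k + 2 ≤ N)
    (a b p : C) (ι : V → C) (D : Finset C)
    (hι : Function.Injective ι)
    (hab : a ≠ b) (hap : a ≠ p) (hbp : b ≠ p)
    (haD : a ∉ D) (hbD : b ∉ D) (hpD : p ∉ D)
    (hιa : ∀ v, ι v ≠ a) (hιb : ∀ v, ι v ≠ b) (hιp : ∀ v, ι v ≠ p)
    (hιD : ∀ v, ι v ∉ D)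
    (hcover : ∀ x : C, (∃ v, x = ι v) ∨ x = a ∨ x = b ∨ x = p ∨ x ∈ D)
    (rank : NegVoter V N k → C → ℕ)
    (hinj : ∀ w, Function.Injective (rank w))
    (hrange : ∀ w x, 1 ≤ rank w x ∧ rank w x ≤ Fintype.card C)
    (ℓcnt : NegVoter V N k → ℕ)
    (hℓ : ∀ w, ℓcnt w = N + 3)
    -- the voters `x_i : a ≻ N[ν_i] ≻ dummies ≻ p ≻ b |`
    (hx : ∀ i : V,
      rank (negX N k i) a = 1 ∧
      (∀ v ∈ closedNbhd G i, rank (negX N k i) (ι v) ≤ (closedNbhd G i).card + 1) ∧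
      (∀ x : C, 2 ≤ rank (negX N k i) x → rank (negX N k i) x ≤ N + 1 →
        (∀ v ∈ closedNbhd G i, x ≠ ι v) → x ∈ D) ∧
      rank (negX N k i) p = N + 2 ∧ rank (negX N k i) b = N + 3)
    -- the voters `x̄_i : a ≻ 𝒱∖N[ν_i] ≻ dummies ≻ p ≻ b |`
    (hxbar : ∀ i : V,
      rank (negXbar N k i) a = 1 ∧
      (∀ v ∈ Finset.univ \ closedNbhd G i,
        rank (negXbar N k i) (ι v) ≤ (Finset.univ \ closedNbhd G i).card + 1) ∧
      (∀ x : C, 2 ≤ rank (negXbar N k i) x → rank (negXbar N k i) x ≤ N + 1 →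
        (∀ v ∈ Finset.univ \ closedNbhd G i, x ≠ ι v) → x ∈ D) ∧
      rank (negXbar N k i) p = N + 2 ∧ rank (negXbar N k i) b = N + 3)
    -- the `2N+1` voters `𝒱 ≻ dummies ≻ b |`
    (h3 : ∀ j : Fin (2 * N + 1),
      (∀ v : V, rank (negY3 N k j) (ι v) ≤ N) ∧
      (∀ x : C, N + 1 ≤ rank (negY3 N k j) x → rank (negY3 N k j) x ≤ N + 2 → x ∈ D) ∧
      rank (negY3 N k j) b = N + 3)
    -- the `N+k` voters `a ≻ dummies ≻ p ≻ b |`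
    (h4 : ∀ j : Fin (N + k),
      rank (negY4 N k j) a = 1 ∧
      (∀ x : C, 2 ≤ rank (negY4 N k j) x → rank (negY4 N k j) x ≤ N + 1 → x ∈ D) ∧
      rank (negY4 N k j) p = N + 2 ∧ rank (negY4 N k j) b = N + 3)
    -- the voter `dummies ≻ p ≻ b |`
    (h5 : ∀ j : Fin 1,
      (∀ x : C, rank (negY5 N k j) x ≤ N + 1 → x ∈ D) ∧
      rank (negY5 N k j) p = N + 2 ∧ rank (negY5 N k j) b = N + 3)
    -- the `N−k−2` voters `dummies ≻ b |`
    (h6 : ∀ j : Fin (N - k - 2),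
      (∀ x : C, rank (negY6 N k j) x ≤ N + 2 → x ∈ D) ∧
      rank (negY6 N k j) b = N + 3)
    -- each dummy candidate is approved by at most one voter
    (hdummy : ∀ d ∈ D,
      (Finset.univ.filter (fun w : NegVoter V N k => rank w d ≤ ℓcnt w)).card ≤ 1)
    -- the bribed election: the approval count of `x_i` is set to `0` for every `ν_i ∈ S`
    (S : Finset V) (hS : S.card = k)
    (ℓ' : NegVoter V N k → ℕ)
    (hℓ'S : ∀ i ∈ S, ℓ' (negX N k i) = 0)
    (hℓ'rest : ∀ w : NegVoter V N k, (∀ i ∈ S, w ≠ negX N k i) → ℓ' w = ℓcnt w) :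
    (IsFallbackWinner rank ℓ' p ↔ ∀ v : V, ∃ s ∈ S, v ∈ closedNbhd G s) ∧
    (IsSimpFallbackWinner rank ℓ' p ↔ ∀ v : V, ∃ s ∈ S, v ∈ closedNbhd G s) ∧
    ((∀ v : V, ∃ s ∈ S, v ∈ closedNbhd G s) →
      (∀ c : C, IsFallbackWinner rank ℓ' c → c = p) ∧
      (∀ c : C, IsSimpFallbackWinner rank ℓ' c → c = p)) :=
  statement8_general G N k hN hNk a b p ι D hι hab hap hbp haD hpD hιa hιb hιp hιD hcover rank hinj
    hrange ℓcnt hℓ hx hxbar h3 h4 h5 h6 hdummy S hS ℓ' hℓ'S hℓ'rest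
end

section
/- Let E be an election with approval counts in which the designated candidate p reaches majority at some round. Let ℓ_0 be the least round at which p reaches majority in E, and let ℓ_1 < ℓ_2 < ⋯ < ℓ_q be the increasing enumeration of the set {rank(p,v^i) : v^i approves p in E and rank(p,v^i) > ℓ_0}. Let β ≥ 0 be an integer and let t be a push action with t_i ≤ 0 for all i and Σ_i |t_i| ≤ β such that p reaches majority at some round in psh(E,t). Then the least round at which p reaches majority in psh(E,t) equals ℓ_j for some j with 0 ≤ j ≤ min{β, q}. -/
/-!
Pushing only lowers approval counts, so the support of `p` never grows and `ℓ' ≥ ℓ₀`.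
If `ℓ' > ℓ₀`, minimality of `ℓ'` forces a voter who approves `p` after the push, hence before
it, to rank `p` exactly at `ℓ'`; so `ℓ' = ℓ_j` with `j - 1` the number of the `ℓ_i` below `ℓ'`.
Each of these ranks brings a new supporter at round `ℓ' - 1` on top of the majority present at
`ℓ₀`, while the push removes at most `β` supporters; as `p` has no majority at round `ℓ' - 1`
after the push, `j ≤ β`.
-/

/-- Candidate `c` reaches majority at round `k`: at least `⌊n/2⌋+1` voters both approve
`c` and rank `c` in their top `k` positions. -/
def reachesMajAt {C : Type*} {n : ℕ} (rank : Fin n → C → ℕ) (ℓcnt : Fin n → ℕ)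
    (k : ℕ) (c : C) : Prop :=
  n / 2 + 1 ≤ (Finset.univ.filter (fun i : Fin n => rank i c ≤ k ∧ rank i c ≤ ℓcnt i)).card

/-- The approval counts after applying a push action `t`. -/
def pushCount {n : ℕ} (m : ℕ) (ℓcnt : Fin n → ℕ) (t : Fin n → ℤ) : Fin n → ℕ :=
  fun i => min m ((ℓcnt i : ℤ) + t i).toNat

open Finset

theorem Finset.card_filter_lt_orderEmbOfFin {α : Type*} [LinearOrder α] (s : Finset α) {k : ℕ}
    (h : #s = k) (i : Fin k) : #(s.filter (· < s.orderEmbOfFin h i)) = i := by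
  have : s.filter (· < s.orderEmbOfFin h i) = (Iio i).map (s.orderEmbOfFin h).toEmbedding := by
    ext x
    simp only [mem_filter, mem_map, mem_Iio, RelEmbedding.coe_toEmbedding]
    constructor
    · rintro ⟨hx, hlt⟩
      obtain ⟨j, rfl⟩ : x ∈ Set.range (s.orderEmbOfFin h) := by simpa using hx
      exact ⟨j, (s.orderEmbOfFin h).lt_iff_lt.1 hlt, rfl⟩
    · rintro ⟨j, hj, rfl⟩
      exact ⟨s.orderEmbOfFin_mem h j, (s.orderEmbOfFin h).lt_iff_lt.2 hj⟩
  rw [this, card_map, Fin.card_Iio]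

theorem Finset.sort_getD_card_filter_lt {α : Type*} [LinearOrder α] {s : Finset α} {x : α}
    (hx : x ∈ s) (d : α) : (s.sort (· ≤ ·)).getD #(s.filter (· < x)) d = x := by
  obtain ⟨i, rfl⟩ : x ∈ Set.range (s.orderEmbOfFin rfl) := by simpa using hx
  rw [card_filter_lt_orderEmbOfFin, List.getD_eq_getElem _ _ (by simp), orderEmbOfFin_apply]
  rfl

theorem Finset.card_filter_ne_zero_le_sum_natAbs {ι : Type*} [Fintype ι] (t : ι → ℤ) :
    #(univ.filter (t · ≠ 0)) ≤ ∑ i, (t i).natAbs := by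
  rw [card_filter]
  refine sum_le_sum fun i _ => ?_
  split_ifs with h
  · exact Int.natAbs_pos.2 h
  · exact Nat.zero_le _

section Election

variable {C : Type*} {n : ℕ} (rank : Fin n → C → ℕ) (c : C)

def supporters (a : Fin n → ℕ) (k : ℕ) : Finset (Fin n) :=
  univ.filter fun i => rank i c ≤ k ∧ rank i c ≤ a i

def approvedRanksAbove (a : Fin n → ℕ) (k : ℕ) : Finset ℕ :=
  (univ.filter fun i => rank i c ≤ a i ∧ k < rank i c).image fun i => rank i c

theorem reachesMajAt_iff {a : Fin n → ℕ} {k : ℕ} :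
    reachesMajAt rank a k c ↔ n / 2 + 1 ≤ #(supporters rank c a k) :=
  Iff.rfl

variable {rank c}

theorem reachesMajAt.mono_count {a b : Fin n → ℕ} {k : ℕ} (h : reachesMajAt rank b k c)
    (hba : ∀ i, b i ≤ a i) : reachesMajAt rank a k c :=
  h.trans <| card_le_card <| monotone_filter_right _ fun i _ hi => ⟨hi.1, hi.2.trans (hba i)⟩

theorem card_supporters_le_add (a b : Fin n → ℕ) (k : ℕ) :
    #(supporters rank c a k) ≤ #(supporters rank c b k) + #(univ.filter fun i => b i ≠ a i) := by
  refine (card_le_card fun i hi => ?_).trans (card_union_le _ _)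
  simp only [supporters, mem_union, mem_filter, mem_univ, true_and] at hi ⊢
  by_cases hab : b i = a i
  · exact .inl (hab ▸ hi)
  · exact .inr hab

theorem card_supporters_add_card_approvedRanksAbove_le (a : Fin n → ℕ) {k l : ℕ} (hkl : k ≤ l) :
    #(supporters rank c a k) + #((approvedRanksAbove rank c a k).filter (· ≤ l)) ≤
      #(supporters rank c a l) := by
  have hsub : supporters rank c a k ⊆ supporters rank c a l :=
    monotone_filter_right _ fun i _ hi => ⟨hi.1.trans hkl, hi.2⟩
  have hranks : (approvedRanksAbove rank c a k).filter (· ≤ l) =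
      (supporters rank c a l \ supporters rank c a k).image fun i => rank i c := by
    rw [approvedRanksAbove, filter_image]
    congr 1
    ext i
    simp only [supporters, mem_filter, mem_sdiff, mem_univ, true_and, not_and, not_le]
    omega
  rw [hranks, ← card_sdiff_add_card_eq_card hsub, add_comm]
  exact Nat.add_le_add_right card_image_le _

theorem exists_rank_eq_of_isLeast {a : Fin n → ℕ} {k : ℕ}
    (h : IsLeast {j | reachesMajAt rank a j c} k) (hk : 0 < k) :
    ∃ i, rank i c = k ∧ rank i c ≤ a i := by
  by_contra! hno
  have hprev : supporters rank c a (k - 1) = supporters rank c a k :=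
    filter_congr fun i _ => by have := hno i; omega
  have := h.2 (show reachesMajAt rank a (k - 1) c by rw [reachesMajAt_iff, hprev]; exact h.1)
  omega

end Election

section Push

variable {n m : ℕ} {ℓcnt : Fin n → ℕ} {t : Fin n → ℤ}

theorem pushCount_le {i : Fin n} (ht : t i ≤ 0) : pushCount m ℓcnt t i ≤ ℓcnt i := by
  unfold pushCount
  omega

theorem card_filter_pushCount_ne_le (hℓ : ∀ i, ℓcnt i ≤ m) :
    #(univ.filter fun i => pushCount m ℓcnt t i ≠ ℓcnt i) ≤ ∑ i, (t i).natAbs := by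
  refine (card_le_card <| monotone_filter_right _ fun i _ hi => ?_).trans
    (card_filter_ne_zero_le_sum_natAbs t)
  have := hℓ i
  unfold pushCount at hi
  omega

end Push

theorem statement11_general {C : Type*} {n m : ℕ}
    (rank : Fin n → C → ℕ)
    (ℓcnt : Fin n → ℕ) (hℓ : ∀ i, ℓcnt i ≤ m)
    (p : C)
    (ℓ0 : ℕ) (hℓ0 : IsLeast {j : ℕ | reachesMajAt rank ℓcnt j p} ℓ0)
    (β : ℕ) (t : Fin n → ℤ) (ht : ∀ i, t i ≤ 0) (htβ : ∑ i, (t i).natAbs ≤ β)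
    (ℓ' : ℕ) (hℓ' : IsLeast {j : ℕ | reachesMajAt rank (pushCount m ℓcnt t) j p} ℓ') :
    ∃ j : ℕ, j ≤ β ∧
      j ≤ ((Finset.univ.filter
              (fun i : Fin n => rank i p ≤ ℓcnt i ∧ ℓ0 < rank i p)).image
            (fun i => rank i p)).card ∧
      ℓ' = (ℓ0 :: ((Finset.univ.filter
              (fun i : Fin n => rank i p ≤ ℓcnt i ∧ ℓ0 < rank i p)).image
            (fun i => rank i p)).sort (· ≤ ·)).getD j 0 := by
  show ∃ j, j ≤ β ∧ j ≤ #(approvedRanksAbove rank p ℓcnt ℓ0) ∧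
    ℓ' = (ℓ0 :: (approvedRanksAbove rank p ℓcnt ℓ0).sort (· ≤ ·)).getD j 0
  set S := approvedRanksAbove rank p ℓcnt ℓ0
  rcases (hℓ0.2 (hℓ'.1.mono_count fun i => pushCount_le (ht i))).eq_or_lt with rfl | hlt
  · exact ⟨0, Nat.zero_le _, Nat.zero_le _, rfl⟩
  obtain ⟨i, hi_rank, hi_app⟩ := exists_rank_eq_of_isLeast hℓ' (by omega)
  have hmem : ℓ' ∈ S := mem_image.2
    ⟨i, mem_filter.2 ⟨mem_univ _, hi_app.trans (pushCount_le (ht i)), by omega⟩, hi_rank⟩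
  have hbelow : S.filter (· < ℓ') = S.filter (· ≤ ℓ' - 1) := filter_congr fun _ _ => by omega
  have hnot : ¬ n / 2 + 1 ≤ #(supporters rank p (pushCount m ℓcnt t) (ℓ' - 1)) := fun h => by
    have := hℓ'.2 h
    omega
  have hcount : n / 2 + 1 + #(S.filter (· < ℓ')) ≤
      #(supporters rank p (pushCount m ℓcnt t) (ℓ' - 1)) + β :=
    calc n / 2 + 1 + #(S.filter (· < ℓ'))
        ≤ #(supporters rank p ℓcnt ℓ0) + #(S.filter (· ≤ ℓ' - 1)) :=
          hbelow ▸ Nat.add_le_add_right hℓ0.1 _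
      _ ≤ #(supporters rank p ℓcnt (ℓ' - 1)) :=
          card_supporters_add_card_approvedRanksAbove_le _ (by omega)
      _ ≤ #(supporters rank p (pushCount m ℓcnt t) (ℓ' - 1)) + β :=
          (card_supporters_le_add _ _ _).trans <|
            Nat.add_le_add_left ((card_filter_pushCount_ne_le hℓ).trans htβ) _
  refine ⟨#(S.filter (· < ℓ')) + 1, by omega,
    card_lt_card (filter_ssubset.2 ⟨ℓ', hmem, lt_irrefl _⟩), ?_⟩
  rw [List.getD_cons_succ, sort_getD_card_filter_lt hmem]

/-- let `ℓ₀` be the least round at which `p` reaches majority in `E`, and let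
`ℓ₁ < ⋯ < ℓ_q` enumerate the set of ranks `rank(p,v^i)` over voters approving `p` in `E`
with `rank(p,v^i) > ℓ₀`. If `t` is a push action with `t_i ≤ 0` for all `i` and
`Σ_i |t_i| ≤ β`, and `p` reaches majority at some round in `psh(E,t)`, then the least such
round equals `ℓ_j` for some `0 ≤ j ≤ min{β,q}`. -/
theorem statement11 {C : Type*} [Fintype C] [DecidableEq C] {n m : ℕ}
    (rank : Fin n → C → ℕ)
    (hcard : Fintype.card C = m)
    (hinj : ∀ i, Function.Injective (rank i))
    (hrange : ∀ i c, 1 ≤ rank i c ∧ rank i c ≤ m)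
    (ℓcnt : Fin n → ℕ) (hℓ : ∀ i, ℓcnt i ≤ m)
    (p : C)
    (ℓ0 : ℕ) (hℓ0 : IsLeast {j : ℕ | reachesMajAt rank ℓcnt j p} ℓ0)
    (β : ℕ) (t : Fin n → ℤ) (ht : ∀ i, t i ≤ 0) (htβ : ∑ i, (t i).natAbs ≤ β)
    (ℓ' : ℕ) (hℓ' : IsLeast {j : ℕ | reachesMajAt rank (pushCount m ℓcnt t) j p} ℓ') :
    ∃ j : ℕ, j ≤ β ∧
      j ≤ ((Finset.univ.filter
              (fun i : Fin n => rank i p ≤ ℓcnt i ∧ ℓ0 < rank i p)).image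
            (fun i => rank i p)).card ∧
      ℓ' = (ℓ0 :: ((Finset.univ.filter
              (fun i : Fin n => rank i p ≤ ℓcnt i ∧ ℓ0 < rank i p)).image
            (fun i => rank i p)).sort (· ≤ ·)).getD j 0 :=
  statement11_general rank ℓcnt hℓ p ℓ0 hℓ0 β t ht htβ ℓ' hℓ'
end

section
/- Let E be an election with approval counts, p a designated candidate, and let R be any of the rules SP-AV, Fallback voting, or simplified Fallback voting. Call a push action t with t_i ≥ 0 for all i successful if p is a winner of psh(E,t) under R, and minimal successful if it is successful and no push action s ≠ t with 0 ≤ s_i ≤ t_i for all i is successful. Then for every minimal successful push action t and every voter v^i with t_i > 0: ℓ^i < rank(p,v^i) and ℓ^i + t_i = rank(p,v^i); that is, a minimal successful increase-only bribery raises each modified voter's approval count exactly to the rank of p in that vote. -/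
section Rules

variable {C W : Type*} [Fintype W]

/-- `c` is an SP-AV winner: `c` has maximum approval score. -/
def IsSPAVWinner (rank : W → C → ℕ) (ℓcnt : W → ℕ) (c : C) : Prop :=
  ∀ c' : C, fbApprovalScore rank ℓcnt c' ≤ fbApprovalScore rank ℓcnt c

end Rules

/-!
Lowering approval counts without changing which voters approve `p` can only shrink the
approver sets of the other candidates, while `p`'s approver sets stay the same. Under each
of the three rules `p` therefore stays a winner: rivals' scores drop, and for the Fallback
rules no candidate reaches majority earlier, while `p` still reaches majority at the old
round `k_B`. Now let `t` be minimal successful with `t i > 0`. Decreasing `t i` by one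
changes whether voter `i` approves `p` only if the count `ℓ i + t i` was not truncated and
equals the rank of `p`; otherwise the smaller push action would still be successful.
-/

section Lowering

variable {C W : Type*} [Fintype W] (rank : W → C → ℕ) {ℓ' ℓ : W → ℕ}

lemma fbApproversAt_mono (hle : ∀ w, ℓ' w ≤ ℓ w) (k : ℕ) (c : C) :
    fbApproversAt rank ℓ' k c ⊆ fbApproversAt rank ℓ k c := by
  intro w hw
  simp only [fbApproversAt, Finset.mem_filter, Finset.mem_univ, true_and] at hw ⊢
  exact ⟨hw.1, hw.2.trans (hle w)⟩

lemma fbApproversAt_congr {p : C} (hp : ∀ w, rank w p ≤ ℓ' w ↔ rank w p ≤ ℓ w) (k : ℕ) :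
    fbApproversAt rank ℓ' k p = fbApproversAt rank ℓ k p :=
  Finset.filter_congr fun w _ => and_congr_right' (hp w)

lemma fbApprovalScore_mono (hle : ∀ w, ℓ' w ≤ ℓ w) (c : C) :
    fbApprovalScore rank ℓ' c ≤ fbApprovalScore rank ℓ c :=
  Finset.card_le_card fun w hw => by
    simp only [Finset.mem_filter, Finset.mem_univ, true_and] at hw ⊢
    exact hw.trans (hle w)

lemma fbApprovalScore_congr {p : C} (hp : ∀ w, rank w p ≤ ℓ' w ↔ rank w p ≤ ℓ w) :
    fbApprovalScore rank ℓ' p = fbApprovalScore rank ℓ p :=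
  congrArg Finset.card (Finset.filter_congr fun w _ => hp w)

lemma fbMajAt.mono (hle : ∀ w, ℓ' w ≤ ℓ w) {k : ℕ} {c : C} (h : fbMajAt rank ℓ' k c) :
    fbMajAt rank ℓ k c :=
  h.trans (Finset.card_le_card (fbApproversAt_mono rank hle k c))

lemma fbMajAt_congr {p : C} (hp : ∀ w, rank w p ≤ ℓ' w ↔ rank w p ≤ ℓ w) (k : ℕ) :
    fbMajAt rank ℓ' k p ↔ fbMajAt rank ℓ k p := by
  rw [fbMajAt, fbMajAt, fbApproversAt_congr rank hp]

variable (hle : ∀ w, ℓ' w ≤ ℓ w) {p : C} (hp : ∀ w, rank w p ≤ ℓ' w ↔ rank w p ≤ ℓ w)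
include hle hp

lemma isMaxApprovalScore_of_le (h : ∀ c, fbApprovalScore rank ℓ c ≤ fbApprovalScore rank ℓ p)
    (c : C) : fbApprovalScore rank ℓ' c ≤ fbApprovalScore rank ℓ' p :=
  calc fbApprovalScore rank ℓ' c ≤ fbApprovalScore rank ℓ c := fbApprovalScore_mono rank hle c
    _ ≤ fbApprovalScore rank ℓ p := h c
    _ = fbApprovalScore rank ℓ' p := (fbApprovalScore_congr rank hp).symm

lemma isLeast_majorityRound_of_le {kB : ℕ} (hkB : IsLeast {k | ∃ c, fbMajAt rank ℓ k c} kB)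
    (hpkB : fbMajAt rank ℓ kB p) : IsLeast {k | ∃ c, fbMajAt rank ℓ' k c} kB :=
  ⟨⟨p, (fbMajAt_congr rank hp kB).2 hpkB⟩,
    fun _ ⟨c, hc⟩ => hkB.2 ⟨c, hc.mono rank hle⟩⟩

omit hp in
lemma noMajority_of_le (h : ¬ ∃ k c, fbMajAt rank ℓ k c) : ¬ ∃ k c, fbMajAt rank ℓ' k c :=
  fun ⟨k, c, hc⟩ => h ⟨k, c, hc.mono rank hle⟩

lemma IsSPAVWinner.of_le (h : IsSPAVWinner rank ℓ p) : IsSPAVWinner rank ℓ' p :=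
  isMaxApprovalScore_of_le rank hle hp h

lemma IsFallbackWinner.of_le (h : IsFallbackWinner rank ℓ p) : IsFallbackWinner rank ℓ' p := by
  rcases h with ⟨kB, hkB, hmax⟩ | ⟨hno, hmax⟩
  · obtain ⟨c, hc⟩ := hkB.1
    refine Or.inl ⟨kB, isLeast_majorityRound_of_le rank hle hp hkB (hc.trans (hmax c)),
      fun c' => ?_⟩
    calc (fbApproversAt rank ℓ' kB c').card
        ≤ (fbApproversAt rank ℓ kB c').card :=
          Finset.card_le_card (fbApproversAt_mono rank hle kB c')
      _ ≤ (fbApproversAt rank ℓ kB p).card := hmax c'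
      _ = (fbApproversAt rank ℓ' kB p).card := by rw [fbApproversAt_congr rank hp]
  · exact Or.inr ⟨noMajority_of_le rank hle hno, isMaxApprovalScore_of_le rank hle hp hmax⟩

lemma IsSimpFallbackWinner.of_le (h : IsSimpFallbackWinner rank ℓ p) :
    IsSimpFallbackWinner rank ℓ' p := by
  rcases h with ⟨kB, hkB, hpkB⟩ | ⟨hno, hmax⟩
  · exact Or.inl ⟨kB, isLeast_majorityRound_of_le rank hle hp hkB hpkB,
      (fbMajAt_congr rank hp kB).2 hpkB⟩
  · exact Or.inr ⟨noMajority_of_le rank hle hno, isMaxApprovalScore_of_le rank hle hp hmax⟩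

end Lowering

lemma approves_iff_of_pred_push {r ℓ m t : ℕ} (ht : 0 < t) (h : ¬ (ℓ + t ≤ m ∧ r = ℓ + t)) :
    r ≤ min m (ℓ + (t - 1)) ↔ r ≤ min m (ℓ + t) := by
  omega

lemma winner_of_pred_push {C : Type*} {n m : ℕ} (rank : Fin n → C → ℕ) (ℓcnt : Fin n → ℕ)
    (p : C) (Rwin : (Fin n → C → ℕ) → (Fin n → ℕ) → C → Prop)
    (hR : Rwin = IsSPAVWinner ∨ Rwin = IsFallbackWinner ∨ Rwin = IsSimpFallbackWinner)
    (t : Fin n → ℕ) (hsucc : Rwin rank (fun i => min m (ℓcnt i + t i)) p) {i : Fin n}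
    (hti : 0 < t i) (hi : ¬ (ℓcnt i + t i ≤ m ∧ rank i p = ℓcnt i + t i)) :
    Rwin rank (fun j => min m (ℓcnt j + Function.update t i (t i - 1) j)) p := by
  have hle : ∀ j, min m (ℓcnt j + Function.update t i (t i - 1) j) ≤ min m (ℓcnt j + t j) := by
    intro j
    rcases eq_or_ne j i with rfl | hj
    · simp only [Function.update_self]; omega
    · simp [Function.update_of_ne hj]
  have hp : ∀ j, rank j p ≤ min m (ℓcnt j + Function.update t i (t i - 1) j) ↔
      rank j p ≤ min m (ℓcnt j + t j) := by
    intro j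
    rcases eq_or_ne j i with rfl | hj
    · simpa only [Function.update_self] using approves_iff_of_pred_push hti hi
    · simp [Function.update_of_ne hj]
  rcases hR with rfl | rfl | rfl
  · exact hsucc.of_le rank hle hp
  · exact hsucc.of_le rank hle hp
  · exact hsucc.of_le rank hle hp

theorem statement12_general {C : Type*} {n m : ℕ}
    (rank : Fin n → C → ℕ)
    (ℓcnt : Fin n → ℕ)
    (p : C)
    (Rwin : (Fin n → C → ℕ) → (Fin n → ℕ) → C → Prop)
    (hR : Rwin = IsSPAVWinner ∨ Rwin = IsFallbackWinner ∨ Rwin = IsSimpFallbackWinner)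
    (t : Fin n → ℕ)
    (hsucc : Rwin rank (fun i => min m (ℓcnt i + t i)) p)
    (hmin : ∀ s : Fin n → ℕ, s ≠ t → (∀ i, s i ≤ t i) →
      ¬ Rwin rank (fun i => min m (ℓcnt i + s i)) p) :
    ∀ i : Fin n, 0 < t i → ℓcnt i < rank i p ∧ ℓcnt i + t i = rank i p := by
  intro i hti
  have hpush : ℓcnt i + t i ≤ m ∧ rank i p = ℓcnt i + t i := by
    by_contra hi
    refine hmin (Function.update t i (t i - 1)) (fun h => ?_) (fun j => ?_)
      (winner_of_pred_push rank ℓcnt p Rwin hR t hsucc hti hi)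
    · have := congrFun h i
      simp only [Function.update_self] at this
      omega
    · rcases eq_or_ne j i with rfl | hj
      · simp
      · simp [Function.update_of_ne hj]
  exact ⟨by omega, hpush.2.symm⟩

/-- for any of SP-AV, Fallback, and simplified Fallback, a minimal
successful increase-only push action raises the approval count of every modified voter
exactly to the rank of `p` in that vote. -/
theorem statement12 {C : Type*} [Fintype C] [DecidableEq C] {n m : ℕ}
    (rank : Fin n → C → ℕ)
    (hcard : Fintype.card C = m)
    (hinj : ∀ i, Function.Injective (rank i))
    (hrange : ∀ i c, 1 ≤ rank i c ∧ rank i c ≤ m)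
    (ℓcnt : Fin n → ℕ) (hℓ : ∀ i, ℓcnt i ≤ m)
    (p : C)
    (Rwin : (Fin n → C → ℕ) → (Fin n → ℕ) → C → Prop)
    (hR : Rwin = IsSPAVWinner ∨ Rwin = IsFallbackWinner ∨ Rwin = IsSimpFallbackWinner)
    (t : Fin n → ℕ)
    (hsucc : Rwin rank (fun i => min m (ℓcnt i + t i)) p)
    (hmin : ∀ s : Fin n → ℕ, s ≠ t → (∀ i, s i ≤ t i) →
      ¬ Rwin rank (fun i => min m (ℓcnt i + s i)) p) :
    ∀ i : Fin n, 0 < t i → ℓcnt i < rank i p ∧ ℓcnt i + t i = rank i p :=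
  statement12_general rank ℓcnt p Rwin hR t hsucc hmin
end
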